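/- arXiv:math/0407203 — 8 statements merged into one kernel-verified Lean document; each statement's English description precedes it below -/
import Mathlib

section
/- Let G be a group and N a normal subgroup containing the commutator subgroup [N,N]. The abelianization N/[N,N] is a right module over the group ring Z[G/N] via conjugation ([x]·g = [g^{-1} x g]), and the preimage in N of the torsion submodule of N/[N,N] (assuming Z[G/N] is an Ore domain) is a normal subgroup of G. -/
/-!
Over a domain `R` with the right Ore condition, the elements of a right `R`-module killed by a
nonzero element of `R` form a submodule: if `m • a = 0` and `n • b = 0`, pick `a x = b y ≠ 0`,
which kills `m + n`, and `m • c` is killed by `y` whenever `a x = c y`.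

Conjugation by `g ∈ G` acts on `N/[N,N]` as the unit `gN` of `ℤ[G/N]`, so the preimage in `G`
of any `ℤ[G/N]`-submodule of `N/[N,N]` is normal. Writing `γ ∈ ℤ[G/N]` as `∑ kᵢ ηᵢ`, the element
`[x] • γ` is the class of `∏ ηᵢ⁻¹ x^kᵢ ηᵢ`.
-/

open scoped RightActions
open MulOpposite (op)

section RightTorsion

variable (R M : Type*) [Ring R] [Nontrivial R] [NoZeroDivisors R]
  [AddCommGroup M] [Module Rᵐᵒᵖ M]

def rightTorsion
    (hore : ∀ a b : R, a ≠ 0 → b ≠ 0 → ∃ x y : R, x ≠ 0 ∧ y ≠ 0 ∧ a * x = b * y) :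
    Submodule Rᵐᵒᵖ M where
  carrier := {m | ∃ r : R, r ≠ 0 ∧ m <• r = 0}
  zero_mem' := ⟨1, one_ne_zero, smul_zero _⟩
  add_mem' := by
    rintro m n ⟨a, ha, hma⟩ ⟨b, hb, hnb⟩
    obtain ⟨x, y, hx, -, hxy⟩ := hore a b ha hb
    refine ⟨a * x, mul_ne_zero ha hx, ?_⟩
    calc (m + n) <• (a * x) = m <• (a * x) + n <• (b * y) := by rw [smul_add, ← hxy]
      _ = m <• a <• x + n <• b <• y := by rw [op_smul_op_smul, op_smul_op_smul]
      _ = 0 := by rw [hma, hnb, smul_zero, smul_zero, add_zero]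
  smul_mem' := by
    rintro c m ⟨a, ha, hma⟩
    obtain ⟨c, rfl⟩ := MulOpposite.op_surjective c
    by_cases hc : c = 0
    · exact ⟨1, one_ne_zero, by rw [hc, MulOpposite.op_zero, zero_smul, smul_zero]⟩
    obtain ⟨x, y, -, hy, hxy⟩ := hore a c ha hc
    refine ⟨y, hy, ?_⟩
    calc m <• c <• y = m <• a <• x := by rw [op_smul_op_smul, ← hxy, ← op_smul_op_smul]
      _ = 0 := by rw [hma, smul_zero]

end RightTorsion

lemma MonoidAlgebra.exists_list_sum_single_eq {k Q α : Type*} [Semiring k] {f : α → Q}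
    (hf : f.Surjective) (γ : MonoidAlgebra k Q) :
    ∃ l : List (k × α), (l.map fun p => single (f p.2) p.1).sum = γ := by
  induction γ using MonoidAlgebra.induction_linear with
  | zero => exact ⟨[], rfl⟩
  | add γ δ hγ hδ =>
    obtain ⟨l, rfl⟩ := hγ
    obtain ⟨l', rfl⟩ := hδ
    exact ⟨l ++ l', by rw [List.map_append, List.sum_append]⟩
  | single q c =>
    obtain ⟨a, rfl⟩ := hf q
    exact ⟨[(c, a)], by simp⟩

lemma Abelianization.additive_hom_ext {H A : Type*} [Group H] [AddMonoid A]
    {f g : Additive (Abelianization H) →+ A}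
    (h : ∀ n, f (Additive.ofMul (Abelianization.of n)) =
      g (Additive.ofMul (Abelianization.of n))) :
    f = g :=
  (MonoidHom.toAdditiveLeft).symm.injective (Abelianization.hom_ext _ _ (MonoidHom.ext h))

namespace Subgroup

variable {G : Type*} [Group G]

lemma ofMul_of_eq_zero_iff {N : Subgroup G} (n : N) :
    Additive.ofMul (Abelianization.of n) = 0 ↔ (n : G) ∈ ⁅N, N⁆ := by
  rw [ofMul_eq_zero, ← MonoidHom.mem_ker, Abelianization.ker_of, ← N.map_subtype_commutator]
  exact (Subgroup.mem_map_iff_mem N.subtype_injective).symm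

variable (N : Subgroup G)

def comapAbelianization (T : AddSubgroup (Additive (Abelianization N))) : Subgroup G :=
  ((AddSubgroup.toSubgroup' T).comap Abelianization.of).map N.subtype

lemma mem_comapAbelianization {T : AddSubgroup (Additive (Abelianization N))} {x : G} :
    x ∈ N.comapAbelianization T ↔
      ∃ hx : x ∈ N, Additive.ofMul (Abelianization.of ⟨x, hx⟩) ∈ T := by
  simp [comapAbelianization]

variable [N.Normal]

noncomputable def conjAbelianization : G →* AddMonoid.End (Additive (Abelianization N)) where
  toFun g := (Abelianization.map (MulAut.conjNormal g : MulAut N).toMonoidHom).toAdditive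
  map_one' := Abelianization.additive_hom_ext fun n => by
    simp only [map_one]
    rfl
  map_mul' g h := Abelianization.additive_hom_ext fun n => by
    simp only [map_mul]
    rfl

lemma le_ker_conjAbelianization : N ≤ N.conjAbelianization.ker := fun g hg =>
  MonoidHom.mem_ker.2 <| Abelianization.additive_hom_ext fun n => by
    have hconj : MulAut.conjNormal g n = ⟨g, hg⟩ * n * (⟨g, hg⟩ : N)⁻¹ := Subtype.ext (by simp)
    show Additive.ofMul (Abelianization.of (MulAut.conjNormal g n)) =
      Additive.ofMul (Abelianization.of n)
    congr 1
    rw [hconj, map_mul, map_mul, mul_right_comm, ← map_mul, mul_inv_cancel, map_one, one_mul]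

noncomputable def groupRingToEnd :
    MonoidAlgebra ℤ (G ⧸ N) →ₐ[ℤ] (AddMonoid.End (Additive (Abelianization N)))ᵐᵒᵖ :=
  MonoidAlgebra.lift ℤ _ _ <|
    (QuotientGroup.lift N N.conjAbelianization N.le_ker_conjAbelianization).op.comp
      (MulEquiv.inv' (G ⧸ N)).toMonoidHom

noncomputable instance : Module (MonoidAlgebra ℤ (G ⧸ N))ᵐᵒᵖ (Additive (Abelianization N)) :=
  Module.compHom _ ((RingEquiv.opOp _).symm.toRingHom.comp N.groupRingToEnd.toRingHom.op)

lemma smul_groupRing (a : Additive (Abelianization N)) (γ : MonoidAlgebra ℤ (G ⧸ N)) :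
    a <• γ = (N.groupRingToEnd γ).unop a := rfl

lemma ofMul_of_smul_single (n : N) (g : G) (k : ℤ) :
    Additive.ofMul (Abelianization.of n) <• MonoidAlgebra.single (g : G ⧸ N) k =
      k • Additive.ofMul (Abelianization.of (MulAut.conjNormal g⁻¹ n)) := by
  rw [smul_groupRing, groupRingToEnd, MonoidAlgebra.lift_single]
  rfl

lemma ofMul_of_smul_listSum (n : N) (l : List (ℤ × G)) :
    Additive.ofMul (Abelianization.of n) <•
        (l.map fun p => MonoidAlgebra.single (p.2 : G ⧸ N) p.1).sum =
      Additive.ofMul (Abelianization.of (l.map fun p => MulAut.conjNormal p.2⁻¹ (n ^ p.1)).prod) := by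
  induction l with
  | nil => simp
  | cons p l ih =>
    rw [List.map_cons, List.sum_cons, MulOpposite.op_add, add_smul, ih, ofMul_of_smul_single,
      List.map_cons, List.prod_cons, map_mul, ofMul_mul, map_zpow, map_zpow, ofMul_zpow]

lemma ofMul_of_smul_listSum_eq_zero_iff (n : N) (l : List (ℤ × G)) :
    Additive.ofMul (Abelianization.of n) <•
        (l.map fun p => MonoidAlgebra.single (p.2 : G ⧸ N) p.1).sum = 0 ↔
      (l.map fun p => p.2⁻¹ * (n : G) ^ p.1 * p.2).prod ∈ ⁅N, N⁆ := by
  rw [ofMul_of_smul_listSum, ofMul_of_eq_zero_iff, SubmonoidClass.coe_list_prod, List.map_map]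
  simp only [Function.comp_def, MulAut.conjNormal_apply, SubgroupClass.coe_zpow, inv_inv]

lemma comapAbelianization_normal
    (T : Submodule (MonoidAlgebra ℤ (G ⧸ N))ᵐᵒᵖ (Additive (Abelianization N))) :
    (N.comapAbelianization T.toAddSubgroup).Normal where
  conj_mem x hx g := by
    obtain ⟨hx, hxT⟩ := N.mem_comapAbelianization.1 hx
    have := T.smul_mem (op (MonoidAlgebra.single ((g⁻¹ : G) : G ⧸ N) 1)) hxT
    rw [ofMul_of_smul_single, one_smul, inv_inv] at this
    exact N.mem_comapAbelianization.2 ⟨_, this⟩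

end Subgroup

theorem preimage_of_torsion_submodule_normal_general
    (G : Type) [Group G] (N : Subgroup G) [N.Normal]
    (hdom : ∀ γ δ : MonoidAlgebra ℤ (G ⧸ N), γ * δ = 0 → γ = 0 ∨ δ = 0)
    (hore : ∀ γ δ : MonoidAlgebra ℤ (G ⧸ N), γ ≠ 0 → δ ≠ 0 →
      ∃ x y : MonoidAlgebra ℤ (G ⧸ N), x ≠ 0 ∧ y ≠ 0 ∧ γ * x = δ * y) :
    ∃ H : Subgroup G, H.Normal ∧ ∀ x : G,
      x ∈ H ↔ x ∈ N ∧ ∃ l : List (ℤ × G),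
        (l.map fun p => MonoidAlgebra.single ((p.2 : G ⧸ N)) p.1).sum ≠ 0 ∧
        (l.map fun p => p.2⁻¹ * x ^ p.1 * p.2).prod ∈ ⁅N, N⁆ := by
  have : NoZeroDivisors (MonoidAlgebra ℤ (G ⧸ N)) := ⟨hdom _ _⟩
  let T := rightTorsion (MonoidAlgebra ℤ (G ⧸ N)) (Additive (Abelianization N)) hore
  refine ⟨N.comapAbelianization T.toAddSubgroup, N.comapAbelianization_normal T, fun x => ?_⟩
  rw [N.mem_comapAbelianization]
  constructor
  · rintro ⟨hx, γ, hγ, hγx⟩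
    obtain ⟨l, rfl⟩ := MonoidAlgebra.exists_list_sum_single_eq QuotientGroup.mk_surjective γ
    exact ⟨hx, l, hγ, (N.ofMul_of_smul_listSum_eq_zero_iff ⟨x, hx⟩ l).1 hγx⟩
  · rintro ⟨hx, l, hl, hlx⟩
    exact ⟨hx, _, hl, (N.ofMul_of_smul_listSum_eq_zero_iff ⟨x, hx⟩ l).2 hlx⟩

/-- Let `G` be a group and `N` a normal subgroup containing `[N,N]`.
The abelianization `N/[N,N]` is a right `ℤ[G/N]`-module via conjugation, and —
assuming `ℤ[G/N]` is a (right Ore) domain — the preimage in `N` of its torsion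
submodule is a normal subgroup of `G`.  The torsion condition on `x ∈ N` is spelled
out concretely: there is a formal sum `∑ kᵢ·ηᵢ` (a list `l` of pairs `(kᵢ, ηᵢ)`)
whose image in `ℤ[G/N]` is nonzero, with `∏ ηᵢ⁻¹ x^{kᵢ} ηᵢ ∈ [N,N]`. -/
theorem preimage_of_torsion_submodule_normal
    (G : Type) [Group G] (N : Subgroup G) [N.Normal] (hNN : ⁅N, N⁆ ≤ N)
    (hdom : ∀ γ δ : MonoidAlgebra ℤ (G ⧸ N), γ * δ = 0 → γ = 0 ∨ δ = 0)
    (hore : ∀ γ δ : MonoidAlgebra ℤ (G ⧸ N), γ ≠ 0 → δ ≠ 0 →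
      ∃ x y : MonoidAlgebra ℤ (G ⧸ N), x ≠ 0 ∧ y ≠ 0 ∧ γ * x = δ * y) :
    ∃ H : Subgroup G, H.Normal ∧ ∀ x : G,
      x ∈ H ↔ x ∈ N ∧ ∃ l : List (ℤ × G),
        (l.map fun p => MonoidAlgebra.single ((p.2 : G ⧸ N)) p.1).sum ≠ 0 ∧
        (l.map fun p => p.2⁻¹ * x ^ p.1 * p.2).prod ∈ ⁅N, N⁆ :=
  preimage_of_torsion_submodule_normal_general G N hdom hore
end

section
/- Let G be a nilpotent group, n ≥ 1, x an element of G^{(n)}_H, and t an element of G whose image in G/G^{(1)}_H is nontrivial. Then in the Z[G/G^{(n)}_H]-module G^{(n)}_H/[G^{(n)}_H, G^{(n)}_H], the class [x] satisfies [x]·(t-1)^k = 0 for some k ≥ 1, where t also denotes the image of t in G/G^{(n)}_H; hence x lies in G^{(n+1)}_H. Consequently, for a nilpotent group, G^{(n)}_H = G^{(1)}_H for all n ≥ 1. -/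
open scoped Classical

/-- The coefficient, at the coset `g N`, of the element of `ℤ[G/N]` represented by the
formal sum `∑ kᵢ·ηᵢ` encoded by the list `l` of pairs `(kᵢ, ηᵢ)`. -/
noncomputable def cosetCoeff {G : Type} [Group G] (N : Subgroup G)
    (l : List (ℤ × G)) (g : G) : ℤ :=
  (l.map fun p => if p.2⁻¹ * g ∈ N then p.1 else 0).sum

/-- The list `l` of pairs `(kᵢ, ηᵢ)` represents a nonzero element of `ℤ[G/N]`. -/
def NonzeroMod {G : Type} [Group G] (N : Subgroup G) (l : List (ℤ × G)) : Prop :=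
  ∃ g : G, cosetCoeff N l g ≠ 0

/-- The result of acting on the class of `x` in `N/[N,N]` by the element of `ℤ[G/N]`
represented by `l = [(k₁,η₁),…]`, computed in `G`:  `∏ ηᵢ⁻¹ x^{kᵢ} ηᵢ`. -/
def actList {G : Type} [Group G] (x : G) (l : List (ℤ × G)) : G :=
  (l.map fun p => p.2⁻¹ * x ^ p.1 * p.2).prod

/-- One step of the torsion-free derived series: the preimage in `N` of the
`ℤ[G/N]`-torsion submodule of `N/[N,N]` (wrapped with `Subgroup.closure`; since
`ℤ[G/N]` is an Ore domain the underlying set is already a subgroup). -/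
def tfStep {G : Type} [Group G] (N : Subgroup G) : Subgroup G :=
  Subgroup.closure
    { x | x ∈ N ∧ ∃ l : List (ℤ × G), NonzeroMod N l ∧ actList x l ∈ ⁅N, N⁆ }

/-- Harvey's torsion-free derived series `G⁽ⁿ⁾_H`. -/
def tfH (G : Type) [Group G] : ℕ → Subgroup G
  | 0 => ⊤
  | n + 1 => tfStep (tfH G n)

/-!
Write `N = G⁽ⁿ⁾_H` and `N/[N,N]` additively.  Conjugation by `t` acts on it ℤ-linearly, by `τ`
say, and `(τ - 1)ᵏ [x]` is the class of the iterated commutator `[t⁻¹, [t⁻¹, …, [t⁻¹, x]]]`, which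
is trivial for large `k` because `G` is nilpotent.  So `[x]` is annihilated by `(t - 1)ᵏ`, and this
element of `ℤ[G/N]` is nonzero as soon as `t ∉ N`: sending the coset `tⁱN` to `ζⁱ`, for a complex
`ζ ≠ 1` of the same order as `tN` (possibly infinite), turns it into `(ζ - 1)ᵏ ≠ 0`.  Hence
`tfStep N = N` for every normal `N` missing some `t`, and the series is constant from `G⁽¹⁾_H` on.
-/

open Filter
open scoped commutatorElement

theorem sub_one_pow_eq_sum {R : Type*} [Ring R] (a : R) (k : ℕ) :
    (a - 1) ^ k =
      ((List.range (k + 1)).map fun i => ((-1 : ℤ) ^ (k - i) * (k.choose i : ℤ)) • a ^ i).sum := by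
  rw [sub_eq_add_neg, (Commute.one_right a).neg_right.add_pow,
    ← List.sum_toFinset _ List.nodup_range, List.toFinset_range]
  refine Finset.sum_congr rfl fun i _ => ?_
  rw [zsmul_eq_mul, (Int.cast_commute _ _).eq, mul_assoc]
  push_cast
  rfl

theorem exists_complex_ne_one_pow_eq_pow {H : Type*} [Group H] {a : H} (ha : a ≠ 1) :
    ∃ ζ : ℂ, ζ ≠ 1 ∧ ∀ i j : ℕ, a ^ i = a ^ j → ζ ^ i = ζ ^ j := by
  rcases Nat.eq_zero_or_pos (orderOf a) with h0 | hpos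
  · refine ⟨2, by norm_num, fun i j hij => ?_⟩
    rw [injective_pow_iff_not_isOfFinOrder.2 (orderOf_eq_zero_iff.1 h0) hij]
  · have hζ := Complex.isPrimitiveRoot_exp (orderOf a) hpos.ne'
    refine ⟨_, hζ.ne_one ?_, fun i j hij => ?_⟩
    · exact lt_of_le_of_ne hpos (Ne.symm (mt orderOf_eq_one_iff.1 ha))
    · rw [← pow_mod_orderOf, ← pow_mod_orderOf _ j, ← hζ.eq_orderOf, pow_eq_pow_iff_modEq.1 hij]

section Group

variable {G : Type} [Group G]

theorem Subgroup.closure_normal_of_conj_mem {s : Set G}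
    (hs : ∀ x ∈ s, ∀ g : G, g * x * g⁻¹ ∈ s) : (Subgroup.closure s).Normal := by
  have hconj : Group.conjugatesOfSet s = s := by
    refine Set.Subset.antisymm (fun a ha => ?_) Group.subset_conjugatesOfSet
    obtain ⟨b, hb, hab⟩ := Group.mem_conjugatesOfSet_iff.1 ha
    obtain ⟨c, rfl⟩ := isConj_iff.1 hab
    exact hs b hb c
  rw [← hconj]
  exact Subgroup.normalClosure_normal

theorem iterate_commutatorElement_mem_lowerCentralSeries (g x : G) (k : ℕ) :
    (⁅g, ·⁆)^[k] x ∈ (⊤ : Subgroup G).lowerCentralSeries k := by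
  induction k with
  | zero => exact Subgroup.mem_top x
  | succ k ih =>
    rw [Function.iterate_succ_apply', Subgroup.lowerCentralSeries_succ, Subgroup.commutator_comm]
    exact Subgroup.commutator_mem_commutator (Subgroup.mem_top g) ih

theorem eventually_iterate_commutatorElement_eq_one [Group.IsNilpotent G] (g x : G) :
    ∀ᶠ k in atTop, (⁅g, ·⁆)^[k] x = 1 := by
  obtain ⟨c, hc⟩ := Subgroup.nilpotent_iff_lowerCentralSeries.1 ‹Group.IsNilpotent G›
  filter_upwards [eventually_ge_atTop c] with k hk
  have := Subgroup.lowerCentralSeries_antitone _ hk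
    (iterate_commutatorElement_mem_lowerCentralSeries g x k)
  rwa [hc, Subgroup.mem_bot] at this

theorem Abelianization.additive_end_ext {f f' : Module.End ℤ (Additive (Abelianization G))}
    (h : ∀ x : G, f (.ofMul (.of x)) = f' (.ofMul (.of x))) : f = f' :=
  LinearMap.ext fun a => QuotientGroup.induction_on a h

theorem Subgroup.coe_mem_commutator_iff (N : Subgroup G) (x : N) :
    (x : G) ∈ ⁅N, N⁆ ↔ Additive.ofMul (Abelianization.of x) = 0 := by
  rw [← N.map_subtype_commutator, ← N.coe_subtype, Subgroup.mem_map_iff_mem N.subtype_injective,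
    ← Abelianization.ker_of, MonoidHom.mem_ker, ofMul_eq_zero]

end Group

section ListEncoding

variable {G : Type} [Group G]

/-- `(t - 1) ^ k`, expanded by the binomial theorem. -/
def subOnePowList (t : G) (k : ℕ) : List (ℤ × G) :=
  (List.range (k + 1)).map fun i => ((-1 : ℤ) ^ (k - i) * (k.choose i : ℤ), t ^ i)

theorem cosetCoeff_eq_sum_single (N : Subgroup G) (l : List (ℤ × G)) (g : G) :
    cosetCoeff N l g = (l.map fun p => Finsupp.single (p.2 : G ⧸ N) p.1).sum g := by
  induction l with
  | nil => simp [cosetCoeff]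
  | cons p l ih =>
    simp only [cosetCoeff, List.map_cons, List.sum_cons] at ih ⊢
    simp only [ih, Finsupp.add_apply, Finsupp.single_apply, QuotientGroup.eq]

theorem nonzeroMod_of_sum_ne_zero {M : Type*} [AddCommGroup M] (N : Subgroup G) (χ : G ⧸ N → M)
    {l : List (ℤ × G)} (h : (l.map fun p => p.1 • χ p.2).sum ≠ 0) : NonzeroMod N l := by
  by_contra hl
  refine h ?_
  simp only [NonzeroMod, cosetCoeff_eq_sum_single, not_exists, not_not] at hl
  have hzero : (l.map fun p => Finsupp.single (p.2 : G ⧸ N) p.1).sum = 0 := by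
    ext c
    induction c using QuotientGroup.induction_on with
    | H g => exact hl g
  simpa [map_list_sum, List.map_map, Function.comp_def] using
    congrArg (Finsupp.linearCombination ℤ χ) hzero

theorem NonzeroMod.map_conj {N : Subgroup G} [hN : N.Normal] {l : List (ℤ × G)}
    (hl : NonzeroMod N l) (g : G) : NonzeroMod N (l.map (Prod.map id (MulAut.conj g))) := by
  obtain ⟨h, hh⟩ := hl
  refine ⟨g * h * g⁻¹, ?_⟩
  have hmem : ∀ a : G, (g * a * g⁻¹)⁻¹ * (g * h * g⁻¹) ∈ N ↔ a⁻¹ * h ∈ N := fun a => by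
    rw [show (g * a * g⁻¹)⁻¹ * (g * h * g⁻¹) = g * (a⁻¹ * h) * g⁻¹ by group]
    exact ⟨fun ha => by simpa [mul_assoc] using hN.conj_mem _ ha g⁻¹, fun ha => hN.conj_mem _ ha g⟩
  simpa only [cosetCoeff, List.map_map, Function.comp_def, Prod.map_fst, Prod.map_snd, id,
    MulAut.conj_apply, hmem] using hh

theorem actList_map {H : Type} [Group H] (f : G →* H) (x : G) (l : List (ℤ × G)) :
    actList (f x) (l.map (Prod.map id f)) = f (actList x l) := by
  simp [actList, map_list_prod, List.map_map, Function.comp_def]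

end ListEncoding

section ConjAction

variable {G : Type} [Group G] (N : Subgroup G) [N.Normal]

/-- The right action `[n] ↦ [g⁻¹ n g]` of `g` on `N/[N,N]`, matching the convention of
`actList`. -/
noncomputable def abelianizationConj (g : G) : Module.End ℤ (Additive (Abelianization N)) :=
  (Abelianization.map (MulAut.conjNormal g⁻¹).toMonoidHom).toAdditive.toIntLinearMap

theorem abelianizationConj_ofMul_of (g : G) (n : N) :
    abelianizationConj N g (.ofMul (.of n)) = .ofMul (.of (MulAut.conjNormal g⁻¹ n)) :=
  rfl

theorem abelianizationConj_one : abelianizationConj N 1 = 1 :=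
  Abelianization.additive_end_ext fun n => by
    rw [abelianizationConj_ofMul_of, inv_one, map_one, MulAut.one_apply]; rfl

theorem abelianizationConj_mul (g h : G) :
    abelianizationConj N (g * h) = abelianizationConj N h * abelianizationConj N g :=
  Abelianization.additive_end_ext fun n => by
    rw [abelianizationConj_ofMul_of, mul_inv_rev, map_mul, MulAut.mul_apply]; rfl

theorem abelianizationConj_pow (g : G) (i : ℕ) :
    abelianizationConj N (g ^ i) = abelianizationConj N g ^ i := by
  induction i with
  | zero => rw [pow_zero, pow_zero, abelianizationConj_one]
  | succ i ih => rw [pow_succ', abelianizationConj_mul, ih, pow_succ]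

theorem actList_mem_commutator_iff (x : N) (l : List (ℤ × G)) :
    actList (x : G) l ∈ ⁅N, N⁆ ↔
      (l.map fun p => p.1 • abelianizationConj N p.2 (.ofMul (.of x))).sum = 0 := by
  have hprod : actList (x : G) l = ↑(l.map fun p => MulAut.conjNormal p.2⁻¹ (x ^ p.1)).prod := by
    simp only [actList, SubmonoidClass.coe_list_prod, List.map_map, Function.comp_def,
      MulAut.conjNormal_apply, SubgroupClass.coe_zpow, inv_inv]
  rw [hprod, Subgroup.coe_mem_commutator_iff]
  simp [map_list_prod, ofMul_list_prod, List.map_map, Function.comp_def,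
    abelianizationConj_ofMul_of]

theorem abelianizationConj_sub_one_pow_ofMul_of (t : G) (k : ℕ) (x : N) :
    ((abelianizationConj N t - 1) ^ k) (.ofMul (.of x)) =
      .ofMul (.of ((fun y => MulAut.conjNormal t⁻¹ y * y⁻¹)^[k] x)) := by
  induction k with
  | zero => rfl
  | succ k ih =>
    rw [pow_succ', Module.End.mul_apply, ih, Function.iterate_succ_apply', LinearMap.sub_apply,
      Module.End.one_apply, abelianizationConj_ofMul_of, map_mul, map_inv Abelianization.of,
      ofMul_mul, ofMul_inv, sub_eq_add_neg]

theorem eventually_actList_subOnePowList_mem [Group.IsNilpotent G] {x : G} (hx : x ∈ N)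
    (t : G) : ∀ᶠ k in atTop, actList x (subOnePowList t k) ∈ ⁅N, N⁆ := by
  lift x to N using hx
  have hcomm : Function.Semiconj ((↑) : N → G) (fun y => MulAut.conjNormal t⁻¹ y * y⁻¹)
      (⁅t⁻¹, ·⁆) := fun y => by simp [commutatorElement_def]
  filter_upwards [eventually_iterate_commutatorElement_eq_one t⁻¹ (x : G)] with k hk
  have hone : (fun y => MulAut.conjNormal t⁻¹ y * y⁻¹)^[k] x = 1 :=
    Subtype.ext ((hcomm.iterate_right k x).trans hk)
  rw [actList_mem_commutator_iff, subOnePowList, List.map_map]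
  calc _ = ((abelianizationConj N t - 1) ^ k) (.ofMul (.of x)) := by
        rw [sub_one_pow_eq_sum]
        refine Eq.trans ?_ (map_list_sum (LinearMap.applyₗ _) _).symm
        simp only [List.map_map, Function.comp_def, LinearMap.applyₗ_apply_apply,
          LinearMap.smul_apply, abelianizationConj_pow]
    _ = 0 := by rw [abelianizationConj_sub_one_pow_ofMul_of, hone, map_one, ofMul_one]

end ConjAction

section TorsionFreeSeries

variable {G : Type} [Group G]

theorem nonzeroMod_subOnePowList {N : Subgroup G} [N.Normal] {t : G} (ht : t ∉ N) (k : ℕ) :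
    NonzeroMod N (subOnePowList t k) := by
  obtain ⟨ζ, hζ1, hζ⟩ := exists_complex_ne_one_pow_eq_pow (mt (QuotientGroup.eq_one_iff t).1 ht)
  have hfactor : Function.FactorsThrough (ζ ^ ·) fun i : ℕ => ((t ^ i : G) : G ⧸ N) :=
    fun i j hij => hζ i j (by simpa using hij)
  refine nonzeroMod_of_sum_ne_zero N
    (Function.extend (fun i : ℕ => ((t ^ i : G) : G ⧸ N)) (ζ ^ ·) 0) ?_
  rw [subOnePowList, List.map_map]
  simp only [Function.comp_def, hfactor.extend_apply]
  rw [← sub_one_pow_eq_sum]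
  exact pow_ne_zero k (sub_ne_zero.2 hζ1)

theorem tfStep_le (N : Subgroup G) : tfStep N ≤ N :=
  (Subgroup.closure_le N).2 fun _ hx => hx.1

theorem tfStep_normal (N : Subgroup G) [hN : N.Normal] : (tfStep N).Normal := by
  refine Subgroup.closure_normal_of_conj_mem fun y ⟨hyN, l, hl, hact⟩ g => ?_
  refine ⟨hN.conj_mem y hyN g, _, hl.map_conj g, ?_⟩
  rw [← MulAut.conj_apply, ← MulEquiv.coe_toMonoidHom, actList_map]
  exact (Subgroup.commutator_normal N N).conj_mem _ hact g

variable (G) in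
theorem tfH_normal (n : ℕ) : (tfH G n).Normal := by
  induction n with
  | zero => exact inferInstanceAs (⊤ : Subgroup G).Normal
  | succ n ih => exact tfStep_normal _

theorem tfStep_eq_self [Group.IsNilpotent G] {N : Subgroup G} [N.Normal] {t : G} (ht : t ∉ N) :
    tfStep N = N := by
  refine le_antisymm (tfStep_le N) fun x hx => Subgroup.subset_closure ?_
  obtain ⟨k, hk⟩ := (eventually_actList_subOnePowList_mem N hx t).exists
  exact ⟨hx, _, nonzeroMod_subOnePowList ht k, hk⟩

theorem tfH_eq_tfH_one [Group.IsNilpotent G] {t : G} (ht : t ∉ tfH G 1) {m : ℕ} (hm : 1 ≤ m) :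
    tfH G m = tfH G 1 := by
  induction m, hm using Nat.le_induction with
  | base => rfl
  | succ m _ ih =>
    have := tfH_normal G 1
    rw [tfH, ih, tfStep_eq_self ht]

end TorsionFreeSeries

/-- Let `G` be nilpotent, `n ≥ 1`, `x ∈ G⁽ⁿ⁾_H`, and `t ∈ G`
nontrivial in `G/G⁽¹⁾_H`.  Then in the `ℤ[G/G⁽ⁿ⁾_H]`-module `G⁽ⁿ⁾_H/[G⁽ⁿ⁾_H,G⁽ⁿ⁾_H]`
the class `[x]` satisfies `[x]·(t-1)^k = 0` for some `k ≥ 1` (spelled out via the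
binomial expansion `(t-1)^k = ∑ (-1)^{k-i} C(k,i) tⁱ`); hence `x ∈ G⁽ⁿ⁺¹⁾_H`.
Consequently `G⁽ᵐ⁾_H = G⁽¹⁾_H` for all `m ≥ 1`. -/
theorem nilpotent_tfH_stabilizes (G : Type) [Group G] [Group.IsNilpotent G]
    (n : ℕ) (hn : 1 ≤ n) (x : G) (hx : x ∈ tfH G n) (t : G) (ht : t ∉ tfH G 1) :
    (∃ k : ℕ, 1 ≤ k ∧
      actList x ((List.range (k + 1)).map fun i =>
        ((-1 : ℤ) ^ (k - i) * (k.choose i : ℤ), t ^ i)) ∈ ⁅tfH G n, tfH G n⁆) ∧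
    x ∈ tfH G (n + 1) ∧
    (∀ m : ℕ, 1 ≤ m → tfH G m = tfH G 1) := by
  have hstab : ∀ m : ℕ, 1 ≤ m → tfH G m = tfH G 1 := fun m => tfH_eq_tfH_one ht
  have := tfH_normal G n
  obtain ⟨k, hk, hk1⟩ :=
    ((eventually_actList_subOnePowList_mem _ hx t).and (eventually_ge_atTop 1)).exists
  refine ⟨⟨k, hk1, hk⟩, ?_, hstab⟩
  rw [hstab (n + 1) (by omega), ← hstab n hn]
  exact hx
end

section
/- Let φ: A → B be a group homomorphism and suppose φ induces an injective homomorphism A/A^{(n)}_H → B/B^{(n)}_H. Then φ(A^{(n+1)}_H) ⊆ B^{(n+1)}_H, and hence φ induces a homomorphism A/A^{(n+1)}_H → B/B^{(n+1)}_H. -/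
open scoped Classical

/-- If `φ : A → B` induces an injective homomorphism
`A/A⁽ⁿ⁾_H → B/B⁽ⁿ⁾_H` (equivalently: `a ∈ A⁽ⁿ⁾_H ↔ φ a ∈ B⁽ⁿ⁾_H`), then
`φ(A⁽ⁿ⁺¹⁾_H) ⊆ B⁽ⁿ⁺¹⁾_H`, so `φ` induces a homomorphism
`A/A⁽ⁿ⁺¹⁾_H → B/B⁽ⁿ⁺¹⁾_H`. -/
theorem tfH_functorial (A B : Type) [Group A] [Group B] (φ : A →* B) (n : ℕ)
    (hmono : ∀ a : A, a ∈ tfH A n ↔ φ a ∈ tfH B n) :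
    ∀ a ∈ tfH A (n + 1), φ a ∈ tfH B (n + 1) := by
  intro a ha
  have hmap : Subgroup.map φ (tfH A n) ≤ tfH B n := by
    rintro b ⟨x, hx, rfl⟩
    exact (hmono x).1 hx
  show φ a ∈ tfStep (tfH B n)
  have ha' : a ∈ tfStep (tfH A n) := ha
  unfold tfStep at ha' ⊢
  refine Subgroup.closure_induction (fun x hx => ?_)
    (by simpa using one_mem _)
    (fun x y _ _ hx hy => by simpa using mul_mem hx hy)
    (fun x _ hx => by simpa using inv_mem hx) ha'
  obtain ⟨hxN, l, ⟨g, hg⟩, hcomm⟩ := hx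
  apply Subgroup.subset_closure
  refine ⟨(hmono x).1 hxN, l.map (fun p => (p.1, φ p.2)), ⟨φ g, ?_⟩, ?_⟩
  · have : cosetCoeff (tfH B n) (l.map (fun p => (p.1, φ p.2))) (φ g)
        = cosetCoeff (tfH A n) l g := by
      unfold cosetCoeff
      rw [List.map_map]
      congr 1
      refine List.map_congr_left fun p _ => ?_
      simp only [Function.comp_apply, ← map_inv, ← map_mul, ← hmono]
    rw [this]; exact hg
  · have heq : actList (φ x) (l.map (fun p => (p.1, φ p.2))) = φ (actList x l) := by
      unfold actList
      rw [List.map_map, map_list_prod, List.map_map]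
      congr 1
      refine List.map_congr_left fun p _ => ?_
      simp [map_zpow]
    rw [heq]
    have := Subgroup.commutator_mono hmap hmap
    apply this
    rw [← Subgroup.map_commutator]
    exact ⟨actList x l, hcomm, rfl⟩
end

section
/- Let H ⊆ G be groups such that Z[H] and Z[G] are right Ore domains with right quotient skew fields K(H) and K(G). Then for any right Z[H]-module M, the natural map M ⊗_{Z[H]} K(H) → M ⊗_{Z[H]} K(G) is injective, and the K(H)-dimension of M ⊗_{Z[H]} K(H) equals the K(G)-dimension of M ⊗_{Z[H]} K(G). -/
/-!
The natural map `θ : M ⊗_{ℤ[H]} K(H) → M ⊗_{ℤ[H]} K(G)` exhibits its target as the base change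
of `V = M ⊗ K(H)` along `K(H) → K(G)`, so a `K(H)`-basis of `V` should map to a `K(G)`-basis.
Spanning holds because `M` already spans `M ⊗ K(G)`. For independence, every `K(H)`-linear
functional `φ` on `V` extends to a `K(G)`-linear functional `ψ` on `M ⊗ K(G)` with `ψ ∘ θ = k ∘ φ`:
the universal property of `M ⊗ K(G)` produces `ψ` from `k ∘ φ` restricted to `M`, and the two sides
agree on the image of `M`, which spans `V`. Applying the coordinate functionals of the basis gives
linear independence, and since functionals separate points of `V`, `θ` is injective.
-/

open MulOpposite Submodule

universe v v'

section Dual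

variable {B C : Type*} [Ring B] [Ring C] {κ : B →+* C} {V V' : Type*}
  [AddCommGroup V] [Module B V] [AddCommGroup V'] [Module C V'] {θ : V →ₛₗ[κ] V'}

theorem span_range_comp_basis_eq_top {I : Type*} (b : Module.Basis I B V)
    (hθ : span C (Set.range θ) = ⊤) : span C (Set.range (θ ∘ b)) = ⊤ := by
  rw [eq_top_iff, ← hθ, span_le]
  rintro _ ⟨v, rfl⟩
  rw [← b.linearCombination_repr v, Finsupp.linearCombination_apply, Finsupp.sum, map_sum]
  refine sum_mem fun i _ => ?_
  rw [map_smulₛₗ]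
  exact smul_mem _ _ (subset_span ⟨i, rfl⟩)

theorem linearIndependent_comp_basis_of_forall_dual {I : Type*} (b : Module.Basis I B V)
    (hdual : ∀ φ : Module.Dual B V, ∃ ψ : Module.Dual C V', ∀ v, ψ (θ v) = κ (φ v)) :
    LinearIndependent C (θ ∘ b) := by
  classical
  refine linearIndependent_iff'.2 fun s c hsum i hi => ?_
  obtain ⟨ψ, hψ⟩ := hdual (b.coord i)
  have := congrArg ψ hsum
  simpa [hψ, Finsupp.single_apply, hi] using this

theorem injective_of_forall_dual [Module.Projective B V] (hκ : Function.Injective κ)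
    (hdual : ∀ φ : Module.Dual B V, ∃ ψ : Module.Dual C V', ∀ v, ψ (θ v) = κ (φ v)) :
    Function.Injective θ := by
  refine (injective_iff_map_eq_zero θ).2 fun v hv =>
    (Module.forall_dual_apply_eq_zero_iff B v).1 fun φ => ?_
  obtain ⟨ψ, hψ⟩ := hdual φ
  exact hκ (by rw [← hψ, hv, map_zero, map_zero])

end Dual

theorem lift_rank_eq_of_forall_dual {B C : Type*} [DivisionRing B] [DivisionRing C] {κ : B →+* C}
    {V : Type v} {V' : Type v'} [AddCommGroup V] [Module B V] [AddCommGroup V'] [Module C V']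
    {θ : V →ₛₗ[κ] V'} (hθ : span C (Set.range θ) = ⊤)
    (hdual : ∀ φ : Module.Dual B V, ∃ ψ : Module.Dual C V', ∀ v, ψ (θ v) = κ (φ v)) :
    Cardinal.lift.{v'} (Module.rank B V) = Cardinal.lift.{v} (Module.rank C V') := by
  let b := Module.Basis.ofVectorSpace B V
  let b' := Module.Basis.mk (linearIndependent_comp_basis_of_forall_dual b hdual)
    (span_range_comp_basis_eq_top b hθ).ge
  rw [← b.mk_eq_rank'', b'.mk_eq_rank]

section BaseChange

variable {A B : Type*} {C : Type} [Ring A] [Ring B] [Ring C] {M V V' : Type}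
  [AddCommGroup M] [Module A M] [AddCommGroup V] [Module B V] [AddCommGroup V'] [Module C V']

/-- `V` is `B ⊗_A M` via `ι`, characterised by its universal property. -/
def IsBaseChangeAlong (σ : A →+* B) (ι : M →ₛₗ[σ] V) : Prop :=
  ∀ (W : Type) [AddCommGroup W] [Module B W] (f : M →ₛₗ[σ] W),
    ∃! g : V →ₗ[B] W, ∀ m, g (ι m) = f m

variable {σ : A →+* B} {τ : A →+* C} {κ : B →+* C} [RingHomCompTriple σ κ τ]
  {ι₁ : M →ₛₗ[σ] V} {ι₂ : M →ₛₗ[τ] V'} {θ : V →ₛₗ[κ] V'}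

theorem IsBaseChangeAlong.span_range_eq_top (h : IsBaseChangeAlong σ ι₁) :
    span B (Set.range ι₁) = ⊤ := by
  set N := span B (Set.range ι₁)
  have hq : N.mkQ = 0 := (h (V ⧸ N) 0).unique
    (fun m => (Quotient.mk_eq_zero N).2 (subset_span ⟨m, rfl⟩)) (fun _ => rfl)
  rw [← N.ker_mkQ, hq, LinearMap.ker_zero]

theorem IsBaseChangeAlong.exists_dual_comp_eq (h₁ : IsBaseChangeAlong σ ι₁)
    (h₂ : IsBaseChangeAlong τ ι₂) (hθ : ∀ m, θ (ι₁ m) = ι₂ m) (φ : Module.Dual B V) :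
    ∃ ψ : Module.Dual C V', ∀ v, ψ (θ v) = κ (φ v) := by
  obtain ⟨ψ, hψ, -⟩ := h₂ C ((κ.toSemilinearMap.comp φ).comp ι₁)
  refine ⟨ψ, LinearMap.congr_fun (f := ψ.comp θ) (g := κ.toSemilinearMap.comp φ)
    (LinearMap.ext_on_range h₁.span_range_eq_top fun m => ?_)⟩
  simp only [LinearMap.comp_apply, hθ, hψ]

end BaseChange

theorem IsBaseChangeAlong.injective_and_rank_eq {A B : Type*} {C : Type} [Ring A]
    [DivisionRing B] [DivisionRing C] {M V V' : Type} [AddCommGroup M] [Module A M]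
    [AddCommGroup V] [Module B V] [AddCommGroup V'] [Module C V'] {σ : A →+* B} {τ : A →+* C} {κ : B →+* C}
    [RingHomCompTriple σ κ τ] {ι₁ : M →ₛₗ[σ] V} {ι₂ : M →ₛₗ[τ] V'} {θ : V →ₛₗ[κ] V'}
    (h₁ : IsBaseChangeAlong σ ι₁) (h₂ : IsBaseChangeAlong τ ι₂) (hθ : ∀ m, θ (ι₁ m) = ι₂ m) :
    Function.Injective θ ∧ Module.rank B V = Module.rank C V' := by
  have hdual := h₁.exists_dual_comp_eq h₂ hθ
  have hspan : span C (Set.range θ) = ⊤ := by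
    rw [eq_top_iff, ← h₂.span_range_eq_top]
    exact span_mono (Set.range_subset_iff.2 fun m => ⟨ι₁ m, hθ m⟩)
  exact ⟨injective_of_forall_dual κ.injective hdual,
    by simpa using lift_rank_eq_of_forall_dual hspan hdual⟩

section Opposite

variable {R S : Type*} [Ring R] [Ring S] {M V : Type} [AddCommGroup M] [Module Rᵐᵒᵖ M]
  [AddCommGroup V] [Module Sᵐᵒᵖ V]

def AddMonoidHom.toOpSemilinearMap (σ : R →+* S) (g : M →+ V)
    (h : ∀ (c : R) (m : M), g (MulOpposite.op c • m) = MulOpposite.op (σ c) • g m) :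
    M →ₛₗ[σ.op] V where
  toFun := g
  map_add' := g.map_add
  map_smul' c m := h c.unop m

theorem isBaseChangeAlong_op (σ : R →+* S) (ι : M →ₛₗ[σ.op] V)
    (h : ∀ (W : Type) [AddCommGroup W] [Module Sᵐᵒᵖ W] (f : M →+ W),
      (∀ (m : M) (r : R), f (op r • m) = op (σ r) • f m) →
      ∃! g : V →+ W, (∀ (c : S) (v : V), g (op c • v) = op c • g v) ∧ ∀ m, g (ι m) = f m) :
    IsBaseChangeAlong σ.op ι := by
  intro W _ _ f
  obtain ⟨g, ⟨hg_smul, hg⟩, hg_unique⟩ := h W f (fun m r => f.map_smulₛₗ (op r) m)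
  refine ⟨{ g with map_smul' := fun c v => hg_smul c.unop v }, hg, fun g' hg' => ?_⟩
  exact LinearMap.toAddMonoidHom_injective
    (hg_unique g'.toAddMonoidHom ⟨fun c v => g'.map_smul (op c) v, hg'⟩)

end Opposite

theorem tensor_quotient_field_injective_and_rank_general
    (H G : Type) [Group H] [Group G] (ι : H →* G)
    (K L : Type) [DivisionRing K] [DivisionRing L]
    (jK : MonoidAlgebra ℤ H →+* K)
    (jL : MonoidAlgebra ℤ G →+* L)
    (k : K →+* L)
    (hcomp : ∀ r : MonoidAlgebra ℤ H, k (jK r) = jL (MonoidAlgebra.mapDomainRingHom ℤ ι r))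
    (M : Type) [AddCommGroup M] [Module (MonoidAlgebra ℤ H)ᵐᵒᵖ M]
    -- `V = M ⊗_{ℤ[H]} K` via its universal property
    (V : Type) [AddCommGroup V] [Module Kᵐᵒᵖ V]
    (ιV : M →+ V)
    (hιV : ∀ (m : M) (r : MonoidAlgebra ℤ H), ιV (op r • m) = op (jK r) • ιV m)
    (hVuniv : ∀ (W : Type) [AddCommGroup W] [Module Kᵐᵒᵖ W] (f : M →+ W),
      (∀ (m : M) (r : MonoidAlgebra ℤ H), f (op r • m) = op (jK r) • f m) →
      ∃! g : V →+ W, (∀ (c : K) (v : V), g (op c • v) = op c • g v) ∧ ∀ m, g (ιV m) = f m)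
    -- `V' = M ⊗_{ℤ[H]} L` via its universal property
    (V' : Type) [AddCommGroup V'] [Module Lᵐᵒᵖ V']
    (ιV' : M →+ V')
    (hιV' : ∀ (m : M) (r : MonoidAlgebra ℤ H),
      ιV' (op r • m) = op (jL (MonoidAlgebra.mapDomainRingHom ℤ ι r)) • ιV' m)
    (hV'univ : ∀ (W : Type) [AddCommGroup W] [Module Lᵐᵒᵖ W] (f : M →+ W),
      (∀ (m : M) (r : MonoidAlgebra ℤ H),
        f (op r • m) = op (jL (MonoidAlgebra.mapDomainRingHom ℤ ι r)) • f m) →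
      ∃! g : V' →+ W, (∀ (c : L) (v : V'), g (op c • v) = op c • g v) ∧ ∀ m, g (ιV' m) = f m)
    -- the natural map `θ : M ⊗ K(H) → M ⊗ K(G)`
    (θ : V →+ V')
    (hθsmul : ∀ (c : K) (v : V), θ (op c • v) = op (k c) • θ v)
    (hθ : ∀ m : M, θ (ιV m) = ιV' m) :
    Function.Injective θ ∧ Module.rank Kᵐᵒᵖ V = Module.rank Lᵐᵒᵖ V' := by
  set jG := jL.comp (MonoidAlgebra.mapDomainRingHom ℤ ι)
  have : RingHomCompTriple jK.op k.op jG.op :=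
    ⟨RingHom.ext fun r => congrArg op (hcomp r.unop)⟩
  have hK := isBaseChangeAlong_op jK (ιV.toOpSemilinearMap jK fun r m => hιV m r) hVuniv
  have hL := isBaseChangeAlong_op jG (ιV'.toOpSemilinearMap jG fun r m => hιV' m r) hV'univ
  exact hK.injective_and_rank_eq (θ := θ.toOpSemilinearMap k hθsmul) hL hθ

/-- Let `H ⊆ G` be groups such that the group rings `ℤ[H]`, `ℤ[G]`
are right Ore domains with right quotient skew fields `K = K(H)`, `L = K(G)` (given
abstractly by embeddings with the right-fraction property `q = r·s⁻¹`), and let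
`k : K → L` be the induced embedding.  For a right `ℤ[H]`-module `M` (a module over
`ℤ[H]ᵐᵒᵖ`), let `V = M ⊗_{ℤ[H]} K` and `V' = M ⊗_{ℤ[H]} L` be given by their universal
properties, with the natural map `θ : V → V'`.  Then `θ` is injective and the
`K`-dimension of `V` equals the `L`-dimension of `V'`. -/
theorem tensor_quotient_field_injective_and_rank
    (H G : Type) [Group H] [Group G] (ι : H →* G) (hι : Function.Injective ι)
    (K L : Type) [DivisionRing K] [DivisionRing L]
    (jK : MonoidAlgebra ℤ H →+* K) (hjK : Function.Injective jK)
    (hKfrac : ∀ q : K, ∃ r s : MonoidAlgebra ℤ H, s ≠ 0 ∧ q * jK s = jK r)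
    (jL : MonoidAlgebra ℤ G →+* L) (hjL : Function.Injective jL)
    (hLfrac : ∀ q : L, ∃ r s : MonoidAlgebra ℤ G, s ≠ 0 ∧ q * jL s = jL r)
    (k : K →+* L)
    (hcomp : ∀ r : MonoidAlgebra ℤ H, k (jK r) = jL (MonoidAlgebra.mapDomainRingHom ℤ ι r))
    (M : Type) [AddCommGroup M] [Module (MonoidAlgebra ℤ H)ᵐᵒᵖ M]
    -- `V = M ⊗_{ℤ[H]} K` via its universal property
    (V : Type) [AddCommGroup V] [Module Kᵐᵒᵖ V]
    (ιV : M →+ V)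
    (hιV : ∀ (m : M) (r : MonoidAlgebra ℤ H), ιV (op r • m) = op (jK r) • ιV m)
    (hVuniv : ∀ (W : Type) [AddCommGroup W] [Module Kᵐᵒᵖ W] (f : M →+ W),
      (∀ (m : M) (r : MonoidAlgebra ℤ H), f (op r • m) = op (jK r) • f m) →
      ∃! g : V →+ W, (∀ (c : K) (v : V), g (op c • v) = op c • g v) ∧ ∀ m, g (ιV m) = f m)
    -- `V' = M ⊗_{ℤ[H]} L` via its universal property
    (V' : Type) [AddCommGroup V'] [Module Lᵐᵒᵖ V']
    (ιV' : M →+ V')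
    (hιV' : ∀ (m : M) (r : MonoidAlgebra ℤ H),
      ιV' (op r • m) = op (jL (MonoidAlgebra.mapDomainRingHom ℤ ι r)) • ιV' m)
    (hV'univ : ∀ (W : Type) [AddCommGroup W] [Module Lᵐᵒᵖ W] (f : M →+ W),
      (∀ (m : M) (r : MonoidAlgebra ℤ H),
        f (op r • m) = op (jL (MonoidAlgebra.mapDomainRingHom ℤ ι r)) • f m) →
      ∃! g : V' →+ W, (∀ (c : L) (v : V'), g (op c • v) = op c • g v) ∧ ∀ m, g (ιV' m) = f m)
    -- the natural map `θ : M ⊗ K(H) → M ⊗ K(G)`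
    (θ : V →+ V')
    (hθsmul : ∀ (c : K) (v : V), θ (op c • v) = op (k c) • θ v)
    (hθ : ∀ m : M, θ (ιV m) = ιV' m) :
    Function.Injective θ ∧ Module.rank Kᵐᵒᵖ V = Module.rank Lᵐᵒᵖ V' :=
  tensor_quotient_field_injective_and_rank_general H G ι K L jK jL k hcomp M V ιV hιV hVuniv V' ιV'
    hιV' hV'univ θ hθsmul hθ
end

section
/- Let Γ be a group whose integral group ring Z[Γ] has the property that every homomorphism of free Z[Γ]-modules that becomes injective after augmentation ⊗_{Z[Γ]} Z is injective. Then for any homomorphism f̃: M → N of free Z[Γ]-modules with M finitely generated, the K(Γ)-rank of the image of f̃ is at least the Q-rank of the image of the induced map f = f̃ ⊗ id: M ⊗_{Z[Γ]} Z → N ⊗_{Z[Γ]} Z, where Z[Γ] is assumed to be an Ore domain with skew quotient field K(Γ). -/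
/-!
Choose an embedding `g : ℤ^r → im f`. Its basis images lift through `f`, and then coefficientwise
through the surjective augmentation, to vectors over `ℤ[Γ]`; these define `h' : ℤ[Γ]^r → M` such
that `f' ∘ h'` augments to `g`. As `g` is injective, conservativity makes `f' ∘ h'` injective, and
its image lies in that of `f'`.
-/

namespace Finsupp

variable {R S : Type*} [Semiring R] [Semiring S] {ι κ ρ : Type*}

def LiesOver (ε : R →+* S) (f : (κ →₀ S) →ₗ[S] (ι →₀ S)) (f' : (κ →₀ R) →ₗ[R] (ι →₀ R)) :
    Prop :=
  ∀ x : κ →₀ R, f (x.mapRange ε (map_zero ε)) = (f' x).mapRange ε (map_zero ε)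

variable {ε : R →+* S}

theorem LiesOver.comp {f : (κ →₀ S) →ₗ[S] (ι →₀ S)} {f' : (κ →₀ R) →ₗ[R] (ι →₀ R)}
    {h : (ρ →₀ S) →ₗ[S] (κ →₀ S)} {h' : (ρ →₀ R) →ₗ[R] (κ →₀ R)}
    (hf : LiesOver ε f f') (hh : LiesOver ε h h') : LiesOver ε (f ∘ₗ h) (f' ∘ₗ h') := fun x => by
  rw [LinearMap.comp_apply, hh, hf, LinearMap.comp_apply]

theorem liesOver_linearCombination (v : ρ → κ →₀ R) :
    LiesOver ε (linearCombination S fun j => (v j).mapRange ε (map_zero ε))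
      (linearCombination R v) := fun x => by
  ext i
  simp only [linearCombination_apply, mapRange_apply, sum_apply, map_finsuppSum]
  rw [sum_mapRange_index (fun _ => by simp)]
  simp

theorem LiesOver.exists_comp_of_range_le (hε : Function.Surjective ε)
    {f : (κ →₀ S) →ₗ[S] (ι →₀ S)} {f' : (κ →₀ R) →ₗ[R] (ι →₀ R)} (hf : LiesOver ε f f')
    {g : (ρ →₀ S) →ₗ[S] (ι →₀ S)} (hg : LinearMap.range g ≤ LinearMap.range f) :
    ∃ h' : (ρ →₀ R) →ₗ[R] (κ →₀ R), LiesOver ε g (f' ∘ₗ h') := by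
  choose v hv using fun j => hg ⟨single j 1, rfl⟩
  choose v' hv' using fun j => mapRange_surjective ε (map_zero ε) hε (v j)
  have hg_eq : g = f ∘ₗ linearCombination S fun j => (v' j).mapRange ε (map_zero ε) := by
    ext j
    simp [hv', hv]
  exact ⟨linearCombination R v', hg_eq ▸ hf.comp (liesOver_linearCombination v')⟩

end Finsupp

open MulOpposite

theorem strebel_rank_lemma_general
    (Γ : Type) [Group Γ]
    (ε : (MonoidAlgebra ℤ Γ)ᵐᵒᵖ →+* ℤ)
    (hconservative : ∀ (I J : Type)
      (g' : (I →₀ (MonoidAlgebra ℤ Γ)ᵐᵒᵖ) →ₗ[(MonoidAlgebra ℤ Γ)ᵐᵒᵖ]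
            (J →₀ (MonoidAlgebra ℤ Γ)ᵐᵒᵖ))
      (g : (I →₀ ℤ) →ₗ[ℤ] (J →₀ ℤ)),
      (∀ x : I →₀ (MonoidAlgebra ℤ Γ)ᵐᵒᵖ,
        g (x.mapRange ε (map_zero ε)) = (g' x).mapRange ε (map_zero ε)) →
      Function.Injective g → Function.Injective g')
    (m : ℕ) (I : Type)
    (f' : (Fin m →₀ (MonoidAlgebra ℤ Γ)ᵐᵒᵖ) →ₗ[(MonoidAlgebra ℤ Γ)ᵐᵒᵖ]
          (I →₀ (MonoidAlgebra ℤ Γ)ᵐᵒᵖ))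
    (f : (Fin m →₀ ℤ) →ₗ[ℤ] (I →₀ ℤ))
    (hf : ∀ x : Fin m →₀ (MonoidAlgebra ℤ Γ)ᵐᵒᵖ,
      f (x.mapRange ε (map_zero ε)) = (f' x).mapRange ε (map_zero ε))
    (r : ℕ)
    (hr : ∃ g : (Fin r →₀ ℤ) →ₗ[ℤ] (I →₀ ℤ),
      Function.Injective g ∧ LinearMap.range g ≤ LinearMap.range f) :
    ∃ g' : (Fin r →₀ (MonoidAlgebra ℤ Γ)ᵐᵒᵖ) →ₗ[(MonoidAlgebra ℤ Γ)ᵐᵒᵖ]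
           (I →₀ (MonoidAlgebra ℤ Γ)ᵐᵒᵖ),
      Function.Injective g' ∧ LinearMap.range g' ≤ LinearMap.range f' := by
  obtain ⟨g, hg_inj, hg_range⟩ := hr
  have hε_surj : Function.Surjective ε := fun n => ⟨n, map_intCast ε n⟩
  obtain ⟨h', hg⟩ := Finsupp.LiesOver.exists_comp_of_range_le hε_surj hf hg_range
  exact ⟨f' ∘ₗ h', hconservative _ _ _ g hg hg_inj, LinearMap.range_comp_le_range h' f'⟩

/-- Strebel's rank lemma.  Let `Γ` be a group whose integral group
ring `R = ℤ[Γ]` (an Ore domain) has Strebel's property: every homomorphism of free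
right `R`-modules whose augmentation is injective is itself injective.  Then for any
homomorphism `f' : M → N` of free right `R`-modules with `M` finitely generated, the
`K(Γ)`-rank of the image of `f'` is at least the `ℚ`-rank of the image of the
augmented map `f`.  Right `R`-modules are modules over `Rᵐᵒᵖ`; free modules are of the
form `ι →₀ Rᵐᵒᵖ`; the augmentation `ε` sends every group element to `1`; and "rank of
the image is at least `r`" is expressed (as in the paper) by the existence of an
embedding of a free module of rank `r` into the image. -/
theorem strebel_rank_lemma
    (Γ : Type) [Group Γ]
    (ε : (MonoidAlgebra ℤ Γ)ᵐᵒᵖ →+* ℤ)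
    (hε : ∀ g : Γ, ε (op (MonoidAlgebra.single g (1 : ℤ))) = 1)
    (hdom : ∀ a b : MonoidAlgebra ℤ Γ, a * b = 0 → a = 0 ∨ b = 0)
    (hore : ∀ a b : MonoidAlgebra ℤ Γ, a ≠ 0 → b ≠ 0 →
      ∃ x y : MonoidAlgebra ℤ Γ, x ≠ 0 ∧ y ≠ 0 ∧ a * x = b * y)
    (hconservative : ∀ (I J : Type)
      (g' : (I →₀ (MonoidAlgebra ℤ Γ)ᵐᵒᵖ) →ₗ[(MonoidAlgebra ℤ Γ)ᵐᵒᵖ]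
            (J →₀ (MonoidAlgebra ℤ Γ)ᵐᵒᵖ))
      (g : (I →₀ ℤ) →ₗ[ℤ] (J →₀ ℤ)),
      (∀ x : I →₀ (MonoidAlgebra ℤ Γ)ᵐᵒᵖ,
        g (x.mapRange ε (map_zero ε)) = (g' x).mapRange ε (map_zero ε)) →
      Function.Injective g → Function.Injective g')
    (m : ℕ) (I : Type)
    (f' : (Fin m →₀ (MonoidAlgebra ℤ Γ)ᵐᵒᵖ) →ₗ[(MonoidAlgebra ℤ Γ)ᵐᵒᵖ]
          (I →₀ (MonoidAlgebra ℤ Γ)ᵐᵒᵖ))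
    (f : (Fin m →₀ ℤ) →ₗ[ℤ] (I →₀ ℤ))
    (hf : ∀ x : Fin m →₀ (MonoidAlgebra ℤ Γ)ᵐᵒᵖ,
      f (x.mapRange ε (map_zero ε)) = (f' x).mapRange ε (map_zero ε))
    (r : ℕ)
    (hr : ∃ g : (Fin r →₀ ℤ) →ₗ[ℤ] (I →₀ ℤ),
      Function.Injective g ∧ LinearMap.range g ≤ LinearMap.range f) :
    ∃ g' : (Fin r →₀ (MonoidAlgebra ℤ Γ)ᵐᵒᵖ) →ₗ[(MonoidAlgebra ℤ Γ)ᵐᵒᵖ]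
           (I →₀ (MonoidAlgebra ℤ Γ)ᵐᵒᵖ),
      Function.Injective g' ∧ LinearMap.range g' ≤ LinearMap.range f' :=
  strebel_rank_lemma_general Γ ε hconservative m I f' f hf r hr
end

section
/- Let R be a right Ore domain. A torsion-free right R-module M is divisible (for every m in M and nonzero r in R there exists m' with m = m'·r) if and only if M is injective as an R-module. -/
open MulOpposite

/-- Let `R` be a right Ore domain.  A torsion-free right `R`-module
`M` (a module over `Rᵐᵒᵖ`) is divisible (for every `m ∈ M` and nonzero `r ∈ R` there
is `m'` with `m = m'·r`) if and only if `M` is injective: every map `L → M` of right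
`R`-modules extends along every injective map `L → N`. -/
theorem divisible_iff_injective
    (R : Type) [Ring R] [IsDomain R]
    (hore : ∀ a b : R, a ≠ 0 → b ≠ 0 → ∃ x y : R, x ≠ 0 ∧ y ≠ 0 ∧ a * x = b * y)
    (M : Type) [AddCommGroup M] [Module Rᵐᵒᵖ M]
    (htf : ∀ (m : M) (r : R), r ≠ 0 → (op r) • m = 0 → m = 0) :
    (∀ (m : M) (r : R), r ≠ 0 → ∃ m' : M, m = (op r) • m') ↔
    (∀ (L N : Type) [AddCommGroup L] [AddCommGroup N]
        [Module Rᵐᵒᵖ L] [Module Rᵐᵒᵖ N] (i : L →ₗ[Rᵐᵒᵖ] N),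
      Function.Injective i → ∀ φ : L →ₗ[Rᵐᵒᵖ] M,
        ∃ ψ : N →ₗ[Rᵐᵒᵖ] M, ∀ l : L, ψ (i l) = φ l) := by
  constructor
  · intro hdiv
    have baer : Module.Baer Rᵐᵒᵖ M := by
      intro I g
      by_cases hI : ∃ α : Rᵐᵒᵖ, α ∈ I ∧ α ≠ 0
      · obtain ⟨α, hαI, hα0⟩ := hI
        have hαu : α.unop ≠ 0 := fun h => hα0 (unop_injective (by simpa using h))
        obtain ⟨m, hm⟩ := hdiv (g ⟨α, hαI⟩) α.unop hαu
        rw [op_unop] at hm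
        refine ⟨LinearMap.toSpanSingleton Rᵐᵒᵖ M m, ?_⟩
        intro ξ hξ
        by_cases hξ0 : ξ = 0
        · subst hξ0
          rw [show ((⟨0, hξ⟩ : I)) = 0 from rfl, map_zero]
          simp
        · have hξu : ξ.unop ≠ 0 := fun h => hξ0 (unop_injective (by simpa using h))
          obtain ⟨s, t, hs, ht, heq⟩ := hore α.unop ξ.unop hαu hξu
          have key : op s * α = op t * ξ := unop_injective (by simpa using heq)
          have h1 : op t • (g ⟨ξ, hξ⟩ - ξ • m) = 0 := by
            have e1 : op t • g ⟨ξ, hξ⟩ = g ⟨op t * ξ, I.smul_mem (op t) hξ⟩ := by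
              rw [← LinearMap.map_smul]
              congr 1
            have e2 : g ⟨op t * ξ, I.smul_mem (op t) hξ⟩
                = (op s * α) • m := by
              have : (⟨op t * ξ, I.smul_mem (op t) hξ⟩ : I)
                  = op s • (⟨α, hαI⟩ : I) := by
                ext; simp [key]
              rw [this, LinearMap.map_smul, hm, smul_smul]
            rw [smul_sub, e1, e2, smul_smul, key, sub_self]
          have := htf _ t ht h1
          have : g ⟨ξ, hξ⟩ = ξ • m := by
            have h2 := sub_eq_zero.mp this
            exact h2
          simp [LinearMap.toSpanSingleton, this]
      · push_neg at hI
        refine ⟨0, ?_⟩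
        intro x hx
        have hx0 : x = 0 := hI x hx
        subst hx0
        rw [show ((⟨0, hx⟩ : I)) = 0 from rfl, map_zero]
        simp
    have inj := baer.injective
    intro L N _ _ _ _ i hi φ
    exact inj.out i hi φ
  · intro hinj m r hr
    have hro : (op r : Rᵐᵒᵖ) ≠ 0 := fun h => hr ((op_eq_zero_iff r).mp h)
    have hi : Function.Injective (LinearMap.toSpanSingleton Rᵐᵒᵖ Rᵐᵒᵖ (op r)) := by
      intro x y hxy
      simp only [LinearMap.toSpanSingleton_apply, smul_eq_mul] at hxy
      exact mul_right_cancel₀ hro hxy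
    obtain ⟨ψ, hψ⟩ := hinj Rᵐᵒᵖ Rᵐᵒᵖ (LinearMap.toSpanSingleton Rᵐᵒᵖ Rᵐᵒᵖ (op r)) hi
      (LinearMap.toSpanSingleton Rᵐᵒᵖ M m)
    refine ⟨ψ 1, ?_⟩
    have h1 := hψ 1
    simp only [LinearMap.toSpanSingleton_apply, smul_eq_mul, one_mul, one_smul] at h1
    calc m = ψ (op r) := h1.symm
      _ = ψ (op r • 1) := by rw [smul_eq_mul, mul_one]
      _ = op r • ψ 1 := ψ.map_smul _ _
end

section
/- Let F be a (possibly infinitely generated) free group and B a finitely related group with H_2(B;Q) = 0, and let φ: F → B induce a monomorphism on H_1(−;Q). If for some finite n the induced map F/F^{(n)} → B/B^{(n)} has nontrivial kernel, then there is a finitely generated free subgroup G of F (free on the letters of a word representing a kernel element) such that φ restricted to G induces a monomorphism on H_1(−;Q) and the map G/G^{(n)} → B/B^{(n)} has nontrivial kernel. -/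
/-! A word in the free generators lies in the subgroup `G` generated by its own letters, and `G` is
a retract of the free group (kill every other generator). Composing with the retraction shows that
rational `H₁`-injectivity of `φ` passes to `φ|_G`, and the inclusion `G ≤ F` maps `G⁽ⁿ⁾` into
`F⁽ⁿ⁾`, so the word stays outside `G⁽ⁿ⁾` while its image stays in `B⁽ⁿ⁾`. -/

/-- `φ` is injective on `H₁(-; ℚ)`: elements mapping to torsion of `Bᵃᵇ` are torsion in `Gᵃᵇ`. -/
def InducesRationalH1Mono {G B : Type*} [Group G] [Group B] (φ : G →* B) : Prop :=
  ∀ a : G, (∃ k : ℕ, 0 < k ∧ φ a ^ k ∈ commutator B) → ∃ k : ℕ, 0 < k ∧ a ^ k ∈ commutator G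

theorem InducesRationalH1Mono.comp_subtype_of_retraction {G B : Type*} [Group G] [Group B]
    {φ : G →* B} (hφ : InducesRationalH1Mono φ) {H : Subgroup G} (r : G →* H)
    (hr : ∀ h : H, r h = h) : InducesRationalH1Mono (φ.comp H.subtype) := by
  intro h hh
  obtain ⟨k, hk, hcomm⟩ := hφ h hh
  refine ⟨k, hk, ?_⟩
  have hmap : r ((h : G) ^ k) ∈ derivedSeries H 1 :=
    map_derivedSeries_le_derivedSeries r 1 (Subgroup.mem_map_of_mem r hcomm)
  rwa [map_pow, hr, derivedSeries_one] at hmap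

namespace FreeGroup

variable {α : Type*}

theorem mk_mem_closure_of_image {T : Set α} {L : List (α × Bool)} (hL : ∀ p ∈ L, p.1 ∈ T) :
    mk L ∈ Subgroup.closure (of '' T) := by
  have hof : ∀ p ∈ L, of p.1 ∈ Subgroup.closure (of '' T) :=
    fun p hp => Subgroup.subset_closure ⟨p.1, hL p hp, rfl⟩
  rw [← lift_of_apply (mk L), lift_mk]
  refine Subgroup.list_prod_mem _ fun x hx => ?_
  obtain ⟨p, hp, rfl⟩ := List.mem_map.mp hx
  cases p.2
  · exact Subgroup.inv_mem _ (hof p hp)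
  · exact hof p hp

theorem mem_closure_of_letters [DecidableEq α] (w : FreeGroup α) :
    w ∈ Subgroup.closure (of '' ((w.toWord.map Prod.fst).toFinset : Set α)) := by
  have h := mk_mem_closure_of_image (T := ((w.toWord.map Prod.fst).toFinset : Set α))
    fun p hp => List.mem_toFinset.mpr (List.mem_map_of_mem hp)
  rwa [mk_toWord] at h

def retractClosure (T : Set α) [DecidablePred (· ∈ T)] :
    FreeGroup α →* Subgroup.closure (of '' T) :=
  lift fun a => if h : a ∈ T then ⟨of a, Subgroup.subset_closure ⟨a, h, rfl⟩⟩ else 1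

theorem retractClosure_apply_coe (T : Set α) [DecidablePred (· ∈ T)]
    (g : Subgroup.closure (of '' T)) : retractClosure T g = g := by
  obtain ⟨g, hg⟩ := g
  induction hg using Subgroup.closure_induction with
  | mem y hy =>
    obtain ⟨a, ha, rfl⟩ := hy
    simp [retractClosure, ha]
  | one => exact Subtype.ext (by simp)
  | mul x y _ _ hx hy => exact Subtype.ext (by simp [hx, hy])
  | inv x _ hx => exact Subtype.ext (by simp [hx])

end FreeGroup

theorem free_subgroup_reduction_general
    (α : Type) (B : Type) [Group B]
    (φ : FreeGroup α →* B)
    (hH1 : ∀ a : FreeGroup α,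
      (∃ k : ℕ, 0 < k ∧ (φ a) ^ k ∈ commutator B) →
      ∃ k : ℕ, 0 < k ∧ a ^ k ∈ commutator (FreeGroup α))
    (n : ℕ)
    (hkernel : ∃ w : FreeGroup α,
      w ∉ derivedSeries (FreeGroup α) n ∧ φ w ∈ derivedSeries B n) :
    ∃ s : Finset α,
      ∀ G : Subgroup (FreeGroup α),
        G = Subgroup.closure (FreeGroup.of '' (s : Set α)) →
        (∀ g : G, (∃ k : ℕ, 0 < k ∧ (φ (g : FreeGroup α)) ^ k ∈ commutator B) →
          ∃ k : ℕ, 0 < k ∧ g ^ k ∈ commutator G) ∧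
        ∃ g : G, g ∉ derivedSeries G n ∧ φ (g : FreeGroup α) ∈ derivedSeries B n := by
  classical
  obtain ⟨w, hwF, hwB⟩ := hkernel
  refine ⟨(w.toWord.map Prod.fst).toFinset, ?_⟩
  rintro G rfl
  refine ⟨InducesRationalH1Mono.comp_subtype_of_retraction hH1 _
    (FreeGroup.retractClosure_apply_coe _), ⟨w, FreeGroup.mem_closure_of_letters w⟩, ?_, hwB⟩
  intro hwG
  exact hwF (map_derivedSeries_le_derivedSeries (Subgroup.subtype _) n
    (Subgroup.mem_map_of_mem _ hwG))

/-- Let `F = FreeGroup α` be a (possibly infinitely generated) free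
group and `B` a finitely related group (presented as `FreeGroup X / normalClosure S`
with `S` finite) with `H₂(B;ℚ) = 0` (expressed via Hopf's formula: every element of
`ker q ∩ [F(X),F(X)]` has a positive power in `⁅ker q, F(X)⁆`), and let
`φ : F → B` induce a monomorphism on `H₁(−;ℚ)` (if `φ a` is torsion in the
abelianization of `B` then `a` is torsion in the abelianization of `F`).  If for some
finite `n` the induced map `F/F⁽ⁿ⁾ → B/B⁽ⁿ⁾` has nontrivial kernel, then there is a
finitely generated free subgroup `G ≤ F`, generated by finitely many of the free
generators, such that `φ` restricted to `G` still induces a monomorphism on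
`H₁(−;ℚ)` and the map `G/G⁽ⁿ⁾ → B/B⁽ⁿ⁾` has nontrivial kernel. -/
theorem free_subgroup_reduction
    (α : Type) (B : Type) [Group B]
    (X : Type) (S : Set (FreeGroup X)) (hS : S.Finite)
    (q : FreeGroup X →* B) (hq : Function.Surjective q)
    (hker : q.ker = Subgroup.normalClosure S)
    (hH2 : ∀ x : FreeGroup X, x ∈ q.ker → x ∈ commutator (FreeGroup X) →
      ∃ k : ℕ, 0 < k ∧ x ^ k ∈ ⁅q.ker, (⊤ : Subgroup (FreeGroup X))⁆)
    (φ : FreeGroup α →* B)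
    (hH1 : ∀ a : FreeGroup α,
      (∃ k : ℕ, 0 < k ∧ (φ a) ^ k ∈ commutator B) →
      ∃ k : ℕ, 0 < k ∧ a ^ k ∈ commutator (FreeGroup α))
    (n : ℕ)
    (hkernel : ∃ w : FreeGroup α,
      w ∉ derivedSeries (FreeGroup α) n ∧ φ w ∈ derivedSeries B n) :
    ∃ s : Finset α,
      ∀ G : Subgroup (FreeGroup α),
        G = Subgroup.closure (FreeGroup.of '' (s : Set α)) →
        (∀ g : G, (∃ k : ℕ, 0 < k ∧ (φ (g : FreeGroup α)) ^ k ∈ commutator B) →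
          ∃ k : ℕ, 0 < k ∧ g ^ k ∈ commutator G) ∧
        ∃ g : G, g ∉ derivedSeries G n ∧ φ (g : FreeGroup α) ∈ derivedSeries B n :=
  free_subgroup_reduction_general α B φ hH1 n hkernel
end

section
/- Let G be the group with presentation ⟨x, y, z | [z,[x,y]] = 1⟩, B the free group on x, y, and φ: G → B the homomorphism sending x ↦ x, y ↦ y, z ↦ 1. Then the class of [x,y] in G^{(1)}/[G^{(1)},G^{(1)}] is Z[G/G^{(1)}]-torsion (so [x,y] ∈ G^{(2)}_H), but φ([x,y]) = [x,y] is not in B^{(2)} = [[B,B],[B,B]]. Hence the torsion-free derived series is not fully invariant: φ(G^{(2)}_H) is not contained in B^{(2)}_H. -/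
open scoped Classical
open scoped commutatorElement

/-! In `G` the relator says that `z` commutes with `[x,y] ∈ G⁽¹⁾_H`, so the class of `[x,y]` is
annihilated by `z - 1`. This is nonzero in `ℤ[G/G⁽¹⁾_H]` because `z ∉ G⁽¹⁾_H`: the exponent
sum of `z` is a homomorphism to the torsion-free group `ℤ`, hence kills `G⁽¹⁾_H`.
So `[x,y] ∈ G⁽²⁾_H`.

In the free group `B = F(x,y)` the Fox derivative `∂/∂x`, read off from the homomorphism
`B → ℤ[A] ⋊ A` with `A = ℤ²`, is additive on `B'`, vanishes on `B''` and is `ℤ[A]`-semilinear.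
As `B'` is the normal closure of `[x,y]`, every element of `B'/B''` is `r • [x,y]` for some
`r ∈ ℤ[A]`, with Fox derivative `r (1 - y)`; since `ℤ[A]` is a domain, `∂/∂x` is injective
on `B'/B''`, which is therefore `ℤ[A]`-torsion-free, so `B⁽²⁾_H = B''`. Finally `[x,y] ∉ B''`
because `∂[x,y]/∂x = 1 - y ≠ 0`. -/

section TorsionFreeStep

variable {G : Type} [Group G]

theorem actList_cons (x : G) (p : ℤ × G) (l : List (ℤ × G)) :
    actList x (p :: l) = p.2⁻¹ * x ^ p.1 * p.2 * actList x l := by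
  simp [actList]

theorem map_actList {H : Type*} [CommGroup H] (π : G →* H) (x : G) (l : List (ℤ × G)) :
    π (actList x l) = π x ^ (l.map Prod.fst).sum := by
  induction l with
  | nil => simp [actList]
  | cons p l ih =>
    rw [actList_cons, map_mul, ih, List.map_cons, List.sum_cons, zpow_add]
    simp only [map_mul, map_inv, map_zpow, inv_mul_cancel_comm]

theorem cosetCoeff_top (l : List (ℤ × G)) (g : G) :
    cosetCoeff (⊤ : Subgroup G) l g = (l.map Prod.fst).sum := by
  simp [cosetCoeff]

theorem mem_tfStep {N : Subgroup G} {x : G} (hx : x ∈ N) {l : List (ℤ × G)}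
    (hl : NonzeroMod N l) (h : actList x l ∈ ⁅N, N⁆) : x ∈ tfStep N :=
  Subgroup.subset_closure ⟨hx, l, hl, h⟩

theorem commutator_le_tfStep (N : Subgroup G) : ⁅N, N⁆ ≤ tfStep N := fun x hx ↦
  mem_tfStep (Subgroup.commutator_le_self N hx) (l := [(1, 1)]) ⟨1, by simp [cosetCoeff]⟩
    (by simpa [actList] using hx)

theorem tfStep_top_le_ker {H : Type*} [CommGroup H] [IsMulTorsionFree H] (π : G →* H) :
    tfStep (⊤ : Subgroup G) ≤ π.ker := by
  rw [tfStep, Subgroup.closure_le]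
  rintro x ⟨-, l, ⟨g, hg⟩, hact⟩
  have h : π x ^ (l.map Prod.fst).sum = 1 := by
    rw [← map_actList, ← MonoidHom.mem_ker]
    exact Abelianization.commutator_subset_ker π (by rwa [commutator_def])
  rw [cosetCoeff_top] at hg
  exact zpow_left_injective hg (h.trans (one_zpow _).symm)

theorem tfStep_top_eq_commutator {H : Type*} [CommGroup H] [IsMulTorsionFree H] (π : G →* H)
    (hπ : π.ker = commutator G) : tfStep (⊤ : Subgroup G) = commutator G :=
  le_antisymm (hπ ▸ tfStep_top_le_ker π) (commutator_def G ▸ commutator_le_tfStep ⊤)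

theorem commutatorElement_mem_tfH_one (a b : G) : ⁅a, b⁆ ∈ tfH G 1 :=
  commutator_le_tfStep ⊤
    (Subgroup.commutator_mem_commutator (Subgroup.mem_top a) (Subgroup.mem_top b))

theorem actList_sub_one_of_commute {g x : G} (h : Commute g x) :
    actList x [(1, g), (-1, 1)] = 1 := by
  simp only [actList, List.map_cons, List.map_nil, List.prod_cons, List.prod_nil, zpow_one,
    zpow_neg, inv_one, mul_one, one_mul]
  rw [mul_assoc g⁻¹, ← h.eq, inv_mul_cancel_left, mul_inv_cancel]

theorem nonzeroMod_sub_one {N : Subgroup G} {g : G} (hg : g ∉ N) :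
    NonzeroMod N [(1, g), (-1, 1)] :=
  ⟨g, by simp [cosetCoeff, hg]⟩

/-- The class of `x` is killed by `g - 1 ≠ 0` in `ℤ[G/N]`. -/
theorem mem_tfStep_of_commute {N : Subgroup G} {g x : G} (hx : x ∈ N) (hg : g ∉ N)
    (h : Commute g x) : x ∈ tfStep N :=
  mem_tfStep hx (nonzeroMod_sub_one hg) (by rw [actList_sub_one_of_commute h]; exact one_mem _)

end TorsionFreeStep

theorem commutator_eq_normalClosure_of_closure_pair {G : Type*} [Group G] {a b : G}
    (h : Subgroup.closure {a, b} = ⊤) : commutator G = Subgroup.normalClosure {⁅a, b⁆} := by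
  refine le_antisymm ?_ (Subgroup.normalClosure_le_normal ?_)
  · set N := Subgroup.normalClosure {⁅a, b⁆}
    have hab : Commute (a : G ⧸ N) b := by
      rw [← commutatorElement_eq_one_iff_commute, ← QuotientGroup.mk'_apply,
        ← QuotientGroup.mk'_apply, ← map_commutatorElement, QuotientGroup.mk'_apply,
        QuotientGroup.eq_one_iff]
      exact Subgroup.subset_normalClosure rfl
    have hgen : Subgroup.closure {(a : G ⧸ N), (b : G ⧸ N)} = ⊤ := by
      rw [← Set.image_pair, ← QuotientGroup.coe_mk', ← MonoidHom.map_closure, h,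
        ← MonoidHom.range_eq_map, MonoidHom.range_eq_top]
      exact QuotientGroup.mk'_surjective N
    have := Subgroup.isMulCommutative_closure (k := {(a : G ⧸ N), (b : G ⧸ N)}) (by
      rintro p (rfl | rfl) q (rfl | rfl)
      exacts [rfl, hab.eq, hab.eq.symm, rfl])
    refine Subgroup.Normal.quotient_commutative_iff_commutator_le.mp ⟨⟨fun p q ↦ ?_⟩⟩
    exact setLike_mul_comm (hgen ▸ Subgroup.mem_top p) (hgen ▸ Subgroup.mem_top q)
  · rintro _ rfl
    rw [commutator_def]
    exact Subgroup.commutator_mem_commutator (Subgroup.mem_top a) (Subgroup.mem_top b)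

theorem Abelianization.of_conjNormal_of_mem {G : Type*} [Group G] {H : Subgroup G} [H.Normal]
    {h : G} (hh : h ∈ H) (x : H) :
    Abelianization.of (MulAut.conjNormal h x) = Abelianization.of x := by
  have : MulAut.conjNormal h x = ⟨h, hh⟩ * x * (⟨h, hh⟩ : H)⁻¹ := Subtype.ext (by simp)
  rw [this, map_mul, map_mul, map_inv, mul_inv_cancel_comm]

namespace FreeGroup

variable {α : Type}

noncomputable def abelianizationEquiv :
    Abelianization (FreeGroup α) ≃* Multiplicative (α →₀ ℤ) :=
  (FreeAbelianGroup.equivFinsupp α).toMultiplicative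

noncomputable def exponentSum : FreeGroup α →* Multiplicative (α →₀ ℤ) :=
  abelianizationEquiv.toMonoidHom.comp Abelianization.of

@[simp] theorem exponentSum_of (i : α) :
    exponentSum (of i) = Multiplicative.ofAdd (Finsupp.single i 1) :=
  FreeAbelianGroup.toFinsupp_of i

theorem ker_exponentSum : (exponentSum (α := α)).ker = commutator (FreeGroup α) := by
  rw [exponentSum, MonoidHom.ker_comp_of_injective _ abelianizationEquiv.toMonoidHom
    abelianizationEquiv.injective, Abelianization.ker_of]

theorem exponentSum_eq_one_iff {w : FreeGroup α} :
    exponentSum w = 1 ↔ w ∈ commutator (FreeGroup α) := by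
  rw [← MonoidHom.mem_ker, ker_exponentSum]

theorem exponentSum_surjective : Function.Surjective (exponentSum (α := α)) :=
  abelianizationEquiv.surjective.comp (QuotientGroup.mk'_surjective _)

theorem tfH_one : tfH (FreeGroup α) 1 = commutator (FreeGroup α) :=
  tfStep_top_eq_commutator exponentSum ker_exponentSum

/-- `a ∈ ℤ^(α)` acts on `ℤ[ℤ^(α)]` by multiplication with the monomial `a`. -/
noncomputable def foxAction :
    Multiplicative (α →₀ ℤ) →* MulAut (Multiplicative (AddMonoidAlgebra ℤ (α →₀ ℤ))) :=
  (MulAutMultiplicative _).symm.toMonoidHom.comp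
    ((DistribMulAction.toAddAut _ _).comp (AddMonoidAlgebra.of ℤ (α →₀ ℤ)).toHomUnits)

/-- `x_j ↦ (∂x_j/∂x_i, x_j)`; a homomorphism into the semidirect product is the same as a
derivation `∂` with `∂(vw) = ∂v + v ∂w`, so the left component of `foxHom i w` is `∂w/∂x_i`. -/
noncomputable def foxHom (i : α) :
    FreeGroup α →*
      Multiplicative (AddMonoidAlgebra ℤ (α →₀ ℤ)) ⋊[foxAction] Multiplicative (α →₀ ℤ) :=
  FreeGroup.lift fun j ↦
    ⟨Multiplicative.ofAdd (if j = i then 1 else 0), Multiplicative.ofAdd (Finsupp.single j 1)⟩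

theorem foxHom_right (i : α) (w : FreeGroup α) : (foxHom i w).right = exponentSum w := by
  have : SemidirectProduct.rightHom.comp (foxHom i) = exponentSum := by
    ext j
    simp [foxHom]
  exact DFunLike.congr_fun this w

noncomputable def foxDeriv (i : α) (w : FreeGroup α) : AddMonoidAlgebra ℤ (α →₀ ℤ) :=
  (foxHom i w).left.toAdd

theorem foxDeriv_mul (i : α) (v w : FreeGroup α) :
    foxDeriv i (v * w) =
      foxDeriv i v + AddMonoidAlgebra.single (exponentSum v).toAdd 1 * foxDeriv i w := by
  rw [foxDeriv, _root_.map_mul, SemidirectProduct.mul_left, foxHom_right]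
  rfl

@[simp] theorem foxDeriv_one (i : α) : foxDeriv i 1 = 0 := by
  simp [foxDeriv]

@[simp] theorem foxDeriv_of (i j : α) : foxDeriv i (of j) = if j = i then 1 else 0 := by
  simp [foxDeriv, foxHom]

theorem foxDeriv_inv (i : α) (w : FreeGroup α) :
    foxDeriv i w⁻¹ = -(AddMonoidAlgebra.single (-(exponentSum w).toAdd) 1 * foxDeriv i w) := by
  have h := foxDeriv_mul i w⁻¹ w
  rw [inv_mul_cancel, foxDeriv_one, _root_.map_inv, toAdd_inv] at h
  linear_combination -h

theorem foxDeriv_mul_of_mem_commutator (i : α) {v : FreeGroup α}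
    (hv : v ∈ commutator (FreeGroup α)) (w : FreeGroup α) :
    foxDeriv i (v * w) = foxDeriv i v + foxDeriv i w := by
  rw [foxDeriv_mul, exponentSum_eq_one_iff.mpr hv, toAdd_one, ← AddMonoidAlgebra.one_def,
    one_mul]

theorem foxDeriv_conj (i : α) {w : FreeGroup α} (hw : w ∈ commutator (FreeGroup α))
    (g : FreeGroup α) :
    foxDeriv i (g * w * g⁻¹) =
      AddMonoidAlgebra.single (exponentSum g).toAdd 1 * foxDeriv i w := by
  have hg : foxDeriv i g +
      AddMonoidAlgebra.single (exponentSum g).toAdd 1 * foxDeriv i g⁻¹ = 0 := by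
    rw [← foxDeriv_mul, mul_inv_cancel, foxDeriv_one]
  rw [foxDeriv_mul, foxDeriv_mul, _root_.map_mul, exponentSum_eq_one_iff.mpr hw, mul_one]
  linear_combination hg

noncomputable def foxDerivHom (i : α) :
    commutator (FreeGroup α) →* Multiplicative (AddMonoidAlgebra ℤ (α →₀ ℤ)) where
  toFun w := Multiplicative.ofAdd (foxDeriv i w)
  map_one' := by simp
  map_mul' v w := by simp [foxDeriv_mul_of_mem_commutator i v.2]

theorem foxDerivHom_apply (i : α) (w : commutator (FreeGroup α)) :
    foxDerivHom i w = Multiplicative.ofAdd (foxDeriv i w) :=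
  rfl

theorem foxDeriv_zpow_of_mem_commutator (i : α) {w : FreeGroup α}
    (hw : w ∈ commutator (FreeGroup α)) (k : ℤ) : foxDeriv i (w ^ k) = k • foxDeriv i w := by
  simpa [foxDerivHom_apply] using
    congrArg Multiplicative.toAdd (map_zpow (foxDerivHom i) ⟨w, hw⟩ k)

theorem foxDeriv_eq_zero_of_mem_commutator_commutator (i : α) {w : FreeGroup α}
    (hw : w ∈ ⁅commutator (FreeGroup α), commutator (FreeGroup α)⁆) : foxDeriv i w = 0 := by
  rw [← Subgroup.map_subtype_commutator] at hw
  obtain ⟨w, hw, rfl⟩ := hw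
  exact congrArg Multiplicative.toAdd (Abelianization.commutator_subset_ker (foxDerivHom i) hw)

noncomputable def foxDerivAb (i : α) :
    Additive (Abelianization (commutator (FreeGroup α))) →+ AddMonoidAlgebra ℤ (α →₀ ℤ) :=
  MonoidHom.toAdditiveLeft (Abelianization.lift (foxDerivHom i))

theorem foxDerivAb_of (i : α) (w : commutator (FreeGroup α)) :
    foxDerivAb i (Additive.ofMul (Abelianization.of w)) = foxDeriv i w :=
  rfl

noncomputable def actListCoeff (l : List (ℤ × FreeGroup α)) : AddMonoidAlgebra ℤ (α →₀ ℤ) :=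
  (l.map fun p ↦ AddMonoidAlgebra.single (-(exponentSum p.2).toAdd) p.1).sum

theorem foxDeriv_actList (i : α) {x : FreeGroup α} (hx : x ∈ commutator (FreeGroup α))
    (l : List (ℤ × FreeGroup α)) : foxDeriv i (actList x l) = actListCoeff l * foxDeriv i x := by
  induction l with
  | nil => simp [actList, actListCoeff]
  | cons p l ih =>
    have hpow : x ^ p.1 ∈ commutator (FreeGroup α) := zpow_mem hx p.1
    have hconj := foxDeriv_conj i hpow p.2⁻¹
    rw [inv_inv] at hconj
    rw [actList_cons, foxDeriv_mul_of_mem_commutator i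
        (Subgroup.Normal.conj_mem' inferInstance _ hpow _), ih, hconj,
      foxDeriv_zpow_of_mem_commutator i hx, _root_.map_inv, toAdd_inv, mul_smul_comm,
      ← smul_mul_assoc, AddMonoidAlgebra.smul_single, smul_eq_mul, mul_one]
    simp only [actListCoeff, List.map_cons, List.sum_cons, add_mul]

theorem coeff_actListCoeff (l : List (ℤ × FreeGroup α)) (g : FreeGroup α) :
    (actListCoeff l).coeff (-(exponentSum g).toAdd) =
      cosetCoeff (commutator (FreeGroup α)) l g := by
  induction l with
  | nil => simp [actListCoeff, cosetCoeff]
  | cons p l ih =>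
    have hcoset : p.2⁻¹ * g ∈ commutator (FreeGroup α) ↔
        -(exponentSum p.2).toAdd = -(exponentSum g).toAdd := by
      rw [← exponentSum_eq_one_iff, _root_.map_mul, _root_.map_inv, inv_mul_eq_one, neg_inj]
      exact Iff.rfl
    simp only [actListCoeff, cosetCoeff, List.map_cons, List.sum_cons] at ih ⊢
    rw [AddMonoidAlgebra.coeff_add, Finsupp.add_apply, ih, AddMonoidAlgebra.coeff_single,
      Finsupp.single_apply]
    simp only [hcoset]

theorem actListCoeff_ne_zero {l : List (ℤ × FreeGroup α)}
    (hl : NonzeroMod (commutator (FreeGroup α)) l) : actListCoeff l ≠ 0 := by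
  obtain ⟨g, hg⟩ := hl
  rw [← coeff_actListCoeff] at hg
  exact fun h ↦ hg (by simp [h])

/-- `r ↦ r • [c]` in the `ℤ[F/F']`-module `F'/F''`, where the monomial `a` acts by conjugation
with any preimage of `a`; the choice made by `surjInv` is irrelevant by `of_conjNormal`. -/
noncomputable def conjSum (c : commutator (FreeGroup α)) :
    AddMonoidAlgebra ℤ (α →₀ ℤ) →+ Additive (Abelianization (commutator (FreeGroup α))) :=
  (Finsupp.liftAddHom fun a ↦ zmultiplesHom _ (Additive.ofMul (Abelianization.of
    (MulAut.conjNormal (Function.surjInv exponentSum_surjective (Multiplicative.ofAdd a)) c)))).comp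
    AddMonoidAlgebra.coeffAddEquiv.toAddMonoidHom

theorem conjSum_single (c : commutator (FreeGroup α)) (a : α →₀ ℤ) (k : ℤ) :
    conjSum c (AddMonoidAlgebra.single a k) = k • Additive.ofMul (Abelianization.of
      (MulAut.conjNormal (Function.surjInv exponentSum_surjective (Multiplicative.ofAdd a)) c)) :=
  Finsupp.liftAddHom_apply_single _ a k

theorem of_conjNormal (c : commutator (FreeGroup α)) (g : FreeGroup α) :
    Additive.ofMul (Abelianization.of (MulAut.conjNormal g c)) =
      conjSum c (AddMonoidAlgebra.single (exponentSum g).toAdd 1) := by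
  set s := Function.surjInv exponentSum_surjective (exponentSum g)
  have hs : g * s⁻¹ ∈ commutator (FreeGroup α) := by
    rw [← exponentSum_eq_one_iff, _root_.map_mul, _root_.map_inv,
      Function.surjInv_eq exponentSum_surjective, mul_inv_cancel]
  rw [conjSum_single, one_zsmul, ofAdd_toAdd,
    ← Abelianization.of_conjNormal_of_mem hs (MulAut.conjNormal s c), ← MulAut.mul_apply,
    ← _root_.map_mul, inv_mul_cancel_right]

theorem foxDerivAb_comp_conjSum (i : α) (c : commutator (FreeGroup α)) :
    (foxDerivAb i).comp (conjSum c) = AddMonoidHom.mulRight (foxDeriv i c) := by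
  ext a
  simp only [AddMonoidHom.comp_apply, AddMonoidAlgebra.singleAddHom_apply, conjSum_single,
    one_zsmul, foxDerivAb_of, MulAut.conjNormal_apply, foxDeriv_conj i c.2,
    Function.surjInv_eq exponentSum_surjective, toAdd_ofAdd, AddMonoidHom.coe_mulRight]

theorem closure_pair_of_zero_one : Subgroup.closure {of (0 : Fin 2), of (1 : Fin 2)} = ⊤ := by
  rw [← closure_range_of]
  congr
  ext w
  simp [Fin.exists_fin_two, eq_comm]

theorem commutator_eq_normalClosure_fin_two :
    commutator (FreeGroup (Fin 2)) = Subgroup.normalClosure {⁅of (0 : Fin 2), of (1 : Fin 2)⁆} :=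
  commutator_eq_normalClosure_of_closure_pair closure_pair_of_zero_one

theorem commutatorElement_of_zero_one_mem :
    ⁅of (0 : Fin 2), of (1 : Fin 2)⁆ ∈ commutator (FreeGroup (Fin 2)) :=
  commutator_eq_normalClosure_fin_two ▸ Subgroup.subset_normalClosure rfl

theorem range_conjSum :
    (conjSum ⟨⁅of (0 : Fin 2), of (1 : Fin 2)⁆, commutatorElement_of_zero_one_mem⟩).range = ⊤ := by
  set c : commutator (FreeGroup (Fin 2)) :=
    ⟨⁅of 0, of 1⁆, commutatorElement_of_zero_one_mem⟩
  suffices h : ∀ w, ∀ hw : w ∈ commutator (FreeGroup (Fin 2)),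
      Additive.ofMul (Abelianization.of ⟨w, hw⟩) ∈ (conjSum c).range by
    refine eq_top_iff.mpr fun x _ ↦ ?_
    obtain ⟨⟨w, hw⟩, hx⟩ : ∃ w, Abelianization.of w = x.toMul := QuotientGroup.mk'_surjective _ _
    rw [← ofMul_toMul x, ← hx]
    exact h w hw
  intro w hw
  have hw' := hw
  rw [commutator_eq_normalClosure_fin_two, Subgroup.normalClosure] at hw'
  induction hw' using Subgroup.closure_induction with
  | mem v hv =>
    obtain ⟨_, rfl, hconj⟩ := Group.mem_conjugatesOfSet_iff.mp hv
    obtain ⟨g, rfl⟩ := isConj_iff.mp hconj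
    have hv : (⟨g * c * g⁻¹, hw⟩ : commutator (FreeGroup (Fin 2))) = MulAut.conjNormal g c :=
      Subtype.ext (MulAut.conjNormal_apply g c).symm
    exact ⟨_, (hv ▸ of_conjNormal c g).symm⟩
  | one => exact ⟨0, by rw [map_zero]; exact congrArg Additive.ofMul (_root_.map_one _).symm⟩
  | mul x y hxc hyc hx hy =>
    have hx' : x ∈ commutator (FreeGroup (Fin 2)) := by
      rw [commutator_eq_normalClosure_fin_two]; exact hxc
    have hy' : y ∈ commutator (FreeGroup (Fin 2)) := by
      rw [commutator_eq_normalClosure_fin_two]; exact hyc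
    change Additive.ofMul
      (Abelianization.of ((⟨x, hx'⟩ : commutator (FreeGroup (Fin 2))) * ⟨y, hy'⟩)) ∈ _
    rw [_root_.map_mul, ofMul_mul]
    exact add_mem (hx hx') (hy hy')
  | inv x hxc hx =>
    have hx' : x ∈ commutator (FreeGroup (Fin 2)) := by
      rw [commutator_eq_normalClosure_fin_two]; exact hxc
    change Additive.ofMul (Abelianization.of (⟨x, hx'⟩ : commutator (FreeGroup (Fin 2)))⁻¹) ∈ _
    rw [_root_.map_inv, ofMul_inv]
    exact neg_mem (hx hx')

theorem foxDeriv_commutatorElement_of_zero_one :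
    foxDeriv 0 ⁅of (0 : Fin 2), of (1 : Fin 2)⁆ =
      1 - AddMonoidAlgebra.single (Finsupp.single 1 1) 1 := by
  simp [commutatorElement_def, foxDeriv_mul, foxDeriv_inv, AddMonoidAlgebra.single_mul_single,
    sub_eq_add_neg]

theorem foxDeriv_commutatorElement_of_zero_one_ne_zero :
    foxDeriv 0 ⁅of (0 : Fin 2), of (1 : Fin 2)⁆ ≠ 0 := by
  rw [foxDeriv_commutatorElement_of_zero_one, sub_ne_zero, AddMonoidAlgebra.one_def, Ne,
    AddMonoidAlgebra.single_left_inj one_ne_zero]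
  exact (Finsupp.single_ne_zero.mpr one_ne_zero).symm

theorem mem_commutator_commutator_of_foxDeriv_eq_zero {w : FreeGroup (Fin 2)}
    (hw : w ∈ commutator (FreeGroup (Fin 2))) (h : foxDeriv 0 w = 0) :
    w ∈ ⁅commutator (FreeGroup (Fin 2)), commutator (FreeGroup (Fin 2))⁆ := by
  obtain ⟨r, hr⟩ := range_conjSum ▸ AddSubgroup.mem_top
    (Additive.ofMul (Abelianization.of (⟨w, hw⟩ : commutator (FreeGroup (Fin 2)))))
  have hr0 : r = 0 := by
    have := congrArg (foxDerivAb 0) hr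
    rw [← AddMonoidHom.comp_apply, foxDerivAb_comp_conjSum, foxDerivAb_of, h,
      AddMonoidHom.coe_mulRight] at this
    exact (mul_eq_zero.mp this).resolve_right foxDeriv_commutatorElement_of_zero_one_ne_zero
  rw [hr0, map_zero] at hr
  rw [← Subgroup.map_subtype_commutator]
  exact ⟨⟨w, hw⟩, (Abelianization.ker_of _).le (congrArg Additive.toMul hr.symm), rfl⟩

theorem tfStep_commutator_fin_two :
    tfStep (commutator (FreeGroup (Fin 2))) =
      ⁅commutator (FreeGroup (Fin 2)), commutator (FreeGroup (Fin 2))⁆ := by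
  refine le_antisymm ?_ (commutator_le_tfStep _)
  rw [tfStep, Subgroup.closure_le]
  rintro x ⟨hx, l, hl, hact⟩
  refine mem_commutator_commutator_of_foxDeriv_eq_zero hx ?_
  have h := foxDeriv_eq_zero_of_mem_commutator_commutator 0 hact
  rw [foxDeriv_actList 0 hx] at h
  exact (mul_eq_zero.mp h).resolve_left (actListCoeff_ne_zero hl)

theorem tfH_two_fin_two :
    tfH (FreeGroup (Fin 2)) 2 =
      ⁅commutator (FreeGroup (Fin 2)), commutator (FreeGroup (Fin 2))⁆ := by
  rw [← tfStep_commutator_fin_two, ← tfH_one]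
  rfl

theorem commutatorElement_of_zero_one_notMem :
    ⁅of (0 : Fin 2), of (1 : Fin 2)⁆ ∉
      ⁅commutator (FreeGroup (Fin 2)), commutator (FreeGroup (Fin 2))⁆ :=
  fun h ↦ foxDeriv_commutatorElement_of_zero_one_ne_zero
    (foxDeriv_eq_zero_of_mem_commutator_commutator 0 h)

end FreeGroup

theorem PresentedGroup.of_notMem_tfH_one {α : Type} {rels : Set (FreeGroup α)}
    (h : rels ⊆ commutator (FreeGroup α)) (i : α) :
    PresentedGroup.of (rels := rels) i ∉ tfH (PresentedGroup rels) 1 := by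
  have hrels : ∀ r ∈ rels, FreeGroup.lift (FreeGroup.lift.symm FreeGroup.exponentSum) r = 1 := by
    intro r hr
    rw [Equiv.apply_symm_apply]
    exact FreeGroup.exponentSum_eq_one_iff.mpr (h hr)
  intro hi
  have := tfStep_top_le_ker (PresentedGroup.toGroup hrels) hi
  rw [MonoidHom.mem_ker, PresentedGroup.toGroup.of] at this
  simpa using congrArg Multiplicative.toAdd this

theorem tfH_not_fully_invariant_general
    (rels : Set (FreeGroup (Fin 3)))
    (hrels : rels = {⁅FreeGroup.of (2 : Fin 3), ⁅FreeGroup.of (0 : Fin 3), FreeGroup.of (1 : Fin 3)⁆⁆})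
    (φ : PresentedGroup rels →* FreeGroup (Fin 2))
    (hx : φ (PresentedGroup.of 0) = FreeGroup.of (0 : Fin 2))
    (hy : φ (PresentedGroup.of 1) = FreeGroup.of (1 : Fin 2)) :
    ⁅PresentedGroup.of (rels := rels) 0, PresentedGroup.of 1⁆ ∈ tfH (PresentedGroup rels) 2 ∧
    actList ⁅PresentedGroup.of (rels := rels) 0, PresentedGroup.of 1⁆
        [((1 : ℤ), PresentedGroup.of 2), ((-1 : ℤ), (1 : PresentedGroup rels))] ∈
      ⁅tfH (PresentedGroup rels) 1, tfH (PresentedGroup rels) 1⁆ ∧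
    φ ⁅PresentedGroup.of (rels := rels) 0, PresentedGroup.of 1⁆ =
      ⁅FreeGroup.of (0 : Fin 2), FreeGroup.of (1 : Fin 2)⁆ ∧
    tfH (FreeGroup (Fin 2)) 2 = derivedSeries (FreeGroup (Fin 2)) 2 ∧
    φ ⁅PresentedGroup.of (rels := rels) 0, PresentedGroup.of 1⁆ ∉
      tfH (FreeGroup (Fin 2)) 2 := by
  have hrel : Commute (PresentedGroup.of (rels := rels) 2)
      ⁅PresentedGroup.of (rels := rels) 0, PresentedGroup.of 1⁆ := by
    have h : PresentedGroup.mk rels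
        ⁅FreeGroup.of (2 : Fin 3), ⁅FreeGroup.of (0 : Fin 3), FreeGroup.of (1 : Fin 3)⁆⁆ = 1 :=
      PresentedGroup.one_of_mem (hrels ▸ Set.mem_singleton _)
    rwa [map_commutatorElement, map_commutatorElement, commutatorElement_eq_one_iff_commute] at h
  have hz : PresentedGroup.of (rels := rels) 2 ∉ tfH (PresentedGroup rels) 1 := by
    refine PresentedGroup.of_notMem_tfH_one ?_ 2
    rw [hrels, Set.singleton_subset_iff]
    exact Subgroup.commutator_mem_commutator (Subgroup.mem_top _) (Subgroup.mem_top _)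
  have hφ : φ ⁅PresentedGroup.of (rels := rels) 0, PresentedGroup.of 1⁆ =
      ⁅FreeGroup.of (0 : Fin 2), FreeGroup.of (1 : Fin 2)⁆ := by
    rw [map_commutatorElement, hx, hy]
  refine ⟨mem_tfStep_of_commute (commutatorElement_mem_tfH_one _ _) hz hrel, ?_, hφ,
    by rw [FreeGroup.tfH_two_fin_two, derivedSeries_succ, derivedSeries_one], ?_⟩
  · rw [actList_sub_one_of_commute hrel]
    exact one_mem _
  · rw [hφ, FreeGroup.tfH_two_fin_two]
    exact FreeGroup.commutatorElement_of_zero_one_notMem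

/-- Let `G = ⟨x,y,z ∣ [z,[x,y]] = 1⟩`, let `B` be the free group on
two generators, and let `φ : G → B` send `x ↦ x`, `y ↦ y`, `z ↦ 1`.  Then `[x,y]`
lies in `G⁽²⁾_H` (its class in `G⁽¹⁾/[G⁽¹⁾,G⁽¹⁾]` is `ℤ[G/G⁽¹⁾]`-torsion, being
annihilated by `z - 1`), but `φ([x,y]) = [x,y]` does not lie in
`B⁽²⁾_H = B⁽²⁾ = [[B,B],[B,B]]`.  Hence the torsion-free derived series is not fully
invariant: `φ(G⁽²⁾_H) ⊄ B⁽²⁾_H`. -/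
theorem tfH_not_fully_invariant
    (rels : Set (FreeGroup (Fin 3)))
    (hrels : rels = {⁅FreeGroup.of (2 : Fin 3), ⁅FreeGroup.of (0 : Fin 3), FreeGroup.of (1 : Fin 3)⁆⁆})
    (φ : PresentedGroup rels →* FreeGroup (Fin 2))
    (hx : φ (PresentedGroup.of 0) = FreeGroup.of (0 : Fin 2))
    (hy : φ (PresentedGroup.of 1) = FreeGroup.of (1 : Fin 2))
    (hz : φ (PresentedGroup.of 2) = 1) :
    ⁅PresentedGroup.of (rels := rels) 0, PresentedGroup.of 1⁆ ∈ tfH (PresentedGroup rels) 2 ∧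
    actList ⁅PresentedGroup.of (rels := rels) 0, PresentedGroup.of 1⁆
        [((1 : ℤ), PresentedGroup.of 2), ((-1 : ℤ), (1 : PresentedGroup rels))] ∈
      ⁅tfH (PresentedGroup rels) 1, tfH (PresentedGroup rels) 1⁆ ∧
    φ ⁅PresentedGroup.of (rels := rels) 0, PresentedGroup.of 1⁆ =
      ⁅FreeGroup.of (0 : Fin 2), FreeGroup.of (1 : Fin 2)⁆ ∧
    tfH (FreeGroup (Fin 2)) 2 = derivedSeries (FreeGroup (Fin 2)) 2 ∧
    φ ⁅PresentedGroup.of (rels := rels) 0, PresentedGroup.of 1⁆ ∉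
      tfH (FreeGroup (Fin 2)) 2 :=
  tfH_not_fully_invariant_general rels hrels φ hx hy
end
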